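/- arXiv:2106.08750 — 5 statements merged into one kernel-verified Lean document; each statement's English description precedes it below -/
import Mathlib

section
/- Fix integers n, m, m' ≥ 1, matrices Φ_f ∈ ℝ^{n×m} and Φ_g ∈ ℝ^{n×m'}, vectors Ỹ ∈ ℝⁿ, θ₀ ∈ ℝᵐ, φ₀ ∈ ℝ^{m'}, and reals λ > 0, ν > 0, and let 𝓛 be the objective 𝓛(θ,φ) = θᵀΦ_fᵀΦ_g φ − ỸᵀΦ_g φ − ½ φᵀΦ_gᵀΦ_g φ − (ν/2)‖φ − φ₀‖² + (λ/2)‖θ − θ₀‖². Set L := Φ_g(Φ_gᵀΦ_g + νI_{m'})⁻¹Φ_gᵀ and θ* := (Φ_fᵀLΦ_f + λIₘ)⁻¹(Φ_fᵀLỸ − νΦ_fᵀΦ_g(Φ_gᵀΦ_g + νI_{m'})⁻¹φ₀ + λθ₀), and φ* := (Φ_gᵀΦ_g + νI_{m'})⁻¹(Φ_gᵀ(Φ_f θ* − Ỹ) + ν φ₀). Then (θ*, φ*) is the unique saddle point of 𝓛, i.e. 𝓛(θ*, φ) ≤ 𝓛(θ*, φ*) ≤ 𝓛(θ, φ*) for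 all θ ∈ ℝᵐ and φ ∈ ℝ^{m'}, and no other pair has this property; equivalently, θ* is the unique minimizer of the function θ ↦ max_{φ ∈ ℝ^{m'}} 𝓛(θ,φ). -/
/-!
For fixed `θ` the objective is a concave quadratic in `φ` with Hessian `-(Φgᵀ Φg + ν I)`, and for
fixed `φ` a convex quadratic in `θ` with Hessian `λ I`; both are definite, so `(θ, φ)` is a saddle
point exactly when both partial gradients vanish. That is a block linear system, and eliminating `φ`
leaves the Schur complement `Φfᵀ L Φf + λ I`, which is positive definite, so the system has the
single solution `(θ*, φ*)`.
-/

open Matrix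

section ConcaveQuadratic

variable {ι : Type*} [Fintype ι]

noncomputable def concaveQuadratic (A : Matrix ι ι ℝ) (w x : ι → ℝ) : ℝ :=
  w ⬝ᵥ x - x ⬝ᵥ (A *ᵥ x) / 2

lemma concaveQuadratic_sub_of_mulVec_eq {A : Matrix ι ι ℝ} (hA : A.IsSymm) {w ψ : ι → ℝ}
    (hψ : A *ᵥ ψ = w) (x : ι → ℝ) :
    concaveQuadratic A w ψ - concaveQuadratic A w x = (ψ - x) ⬝ᵥ (A *ᵥ (ψ - x)) / 2 := by
  have hsymm : x ⬝ᵥ (A *ᵥ ψ) = ψ ⬝ᵥ (A *ᵥ x) := by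
    rw [dotProduct_mulVec, ← mulVec_transpose, hA.eq, dotProduct_comm]
  subst hψ
  simp only [concaveQuadratic, mulVec_sub, dotProduct_sub, sub_dotProduct, hsymm,
    dotProduct_comm (A *ᵥ ψ)]
  ring

variable [DecidableEq ι]

theorem forall_concaveQuadratic_le_iff {A : Matrix ι ι ℝ} (hA : A.PosDef) (w ψ : ι → ℝ) :
    (∀ x, concaveQuadratic A w x ≤ concaveQuadratic A w ψ) ↔ A *ᵥ ψ = w := by
  have hsymm : A.IsSymm := isHermitian_iff_isSymm.mp hA.isHermitian
  have hquad_nonneg (v : ι → ℝ) : 0 ≤ v ⬝ᵥ (A *ᵥ v) := by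
    simpa using hA.posSemidef.dotProduct_mulVec_nonneg v
  refine ⟨fun hmax => ?_, fun hψ x => ?_⟩
  · set ψ₀ := A⁻¹ *ᵥ w
    have hψ₀ : A *ᵥ ψ₀ = w := by
      rw [mulVec_mulVec, mul_nonsing_inv _ ((isUnit_iff_isUnit_det A).mp hA.isUnit),
        one_mulVec]
    have hgap := concaveQuadratic_sub_of_mulVec_eq hsymm hψ₀ ψ
    have hψ₀ψ : ψ₀ = ψ := by
      by_contra hne
      have := hA.dotProduct_mulVec_pos (sub_ne_zero.mpr hne)
      simp only [star_trivial] at this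
      linarith [hmax ψ₀]
    rwa [← hψ₀ψ]
  · linarith [concaveQuadratic_sub_of_mulVec_eq hsymm hψ x, hquad_nonneg (ψ - x)]

end ConcaveQuadratic

lemma posDef_transpose_mul_self_add_smul_one {ι κ : Type*} [Fintype ι] [Fintype κ]
    [DecidableEq κ] (B : Matrix ι κ ℝ) {c : ℝ} (hc : 0 < c) : (Bᵀ * B + c • 1).PosDef := by
  simpa [conjTranspose_eq_transpose_of_trivial] using
    PosDef.posSemidef_add (posSemidef_conjTranspose_mul_self B) (PosDef.one.smul hc)

section LinearSystem

variable {R ι κ : Type*} [CommRing R] [Fintype ι] [Fintype κ] [DecidableEq ι] [DecidableEq κ]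

lemma mulVec_eq_iff_eq_inv_mulVec {A : Matrix κ κ R} (hA : IsUnit A) (x v : κ → R) :
    A *ᵥ x = v ↔ x = A⁻¹ *ᵥ v := by
  have hdet := (isUnit_iff_isUnit_det A).mp hA
  constructor
  · rintro rfl
    rw [mulVec_mulVec, nonsing_inv_mul _ hdet, one_mulVec]
  · rintro rfl
    rw [mulVec_mulVec, mul_nonsing_inv _ hdet, one_mulVec]

/-- Solve the first equation for `φ` and substitute; `Q * A⁻¹ * P + D` is the Schur complement. -/
theorem mulVec_eq_and_mulVec_eq_iff {A : Matrix κ κ R} {D : Matrix ι ι R}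
    (P : Matrix κ ι R) (Q : Matrix ι κ R) (p : κ → R) (q : ι → R)
    (hA : IsUnit A) (hS : IsUnit (Q * A⁻¹ * P + D)) (θ : ι → R) (φ : κ → R) :
    (A *ᵥ φ = P *ᵥ θ + p ∧ D *ᵥ θ = q - Q *ᵥ φ) ↔
      θ = (Q * A⁻¹ * P + D)⁻¹ *ᵥ (q - Q *ᵥ (A⁻¹ *ᵥ p)) ∧ φ = A⁻¹ *ᵥ (P *ᵥ θ + p) := by
  rw [mulVec_eq_iff_eq_inv_mulVec hA, and_comm, ← mulVec_eq_iff_eq_inv_mulVec hS]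
  refine and_congr_left fun hφ => ?_
  subst hφ
  simp only [add_mulVec, mulVec_add, ← mulVec_mulVec]
  constructor <;> intro h <;> linear_combination (norm := module) h

end LinearSystem

section Objective

variable {ι κ κ' : Type*} [Fintype ι] [Fintype κ] [Fintype κ']
  (Φf : Matrix ι κ ℝ) (Φg : Matrix ι κ' ℝ) (Yt : ι → ℝ) (θ₀ : κ → ℝ) (φ₀ : κ' → ℝ)

noncomputable def dualIVObjective (lam ν : ℝ) (θ : κ → ℝ) (φ : κ' → ℝ) : ℝ :=
  (Φf *ᵥ θ) ⬝ᵥ (Φg *ᵥ φ) - Yt ⬝ᵥ (Φg *ᵥ φ)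
    - (1 / 2) * ((Φg *ᵥ φ) ⬝ᵥ (Φg *ᵥ φ))
    - (ν / 2) * ((φ - φ₀) ⬝ᵥ (φ - φ₀))
    + (lam / 2) * ((θ - θ₀) ⬝ᵥ (θ - θ₀))

lemma dualIVObjective_eq_concaveQuadratic_add [DecidableEq κ'] (lam ν : ℝ) (θ : κ → ℝ) (φ : κ' → ℝ) :
    dualIVObjective Φf Φg Yt θ₀ φ₀ lam ν θ φ =
      concaveQuadratic (Φgᵀ * Φg + ν • 1) ((Φgᵀ * Φf) *ᵥ θ + (ν • φ₀ - Φgᵀ *ᵥ Yt)) φ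
        + ((lam / 2) * ((θ - θ₀) ⬝ᵥ (θ - θ₀)) - (ν / 2) * (φ₀ ⬝ᵥ φ₀)) := by
  simp only [dualIVObjective, concaveQuadratic, add_mulVec, smul_mulVec, one_mulVec,
    ← mulVec_mulVec, add_dotProduct, sub_dotProduct, dotProduct_add, dotProduct_sub,
    smul_dotProduct, dotProduct_smul, smul_eq_mul, dotProduct_comm (Φgᵀ *ᵥ _) φ,
    dotProduct_transpose_mulVec, dotProduct_comm φ φ₀, dotProduct_comm θ θ₀]
  ring

lemma dualIVObjective_eq_neg_concaveQuadratic_add [DecidableEq κ] (lam ν : ℝ) (θ : κ → ℝ) (φ : κ' → ℝ) :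
    dualIVObjective Φf Φg Yt θ₀ φ₀ lam ν θ φ =
      -concaveQuadratic (lam • 1) (lam • θ₀ - (Φfᵀ * Φg) *ᵥ φ) θ
        + ((lam / 2) * (θ₀ ⬝ᵥ θ₀) - Yt ⬝ᵥ (Φg *ᵥ φ) - (1 / 2) * ((Φg *ᵥ φ) ⬝ᵥ (Φg *ᵥ φ))
          - (ν / 2) * ((φ - φ₀) ⬝ᵥ (φ - φ₀))) := by
  simp only [dualIVObjective, concaveQuadratic, smul_mulVec, one_mulVec,
    ← mulVec_mulVec, sub_dotProduct, dotProduct_sub,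
    smul_dotProduct, dotProduct_smul, smul_eq_mul, dotProduct_comm (Φfᵀ *ᵥ _) θ,
    dotProduct_transpose_mulVec, dotProduct_comm (Φg *ᵥ φ) (Φf *ᵥ θ), dotProduct_comm θ θ₀]
  ring

theorem forall_dualIVObjective_le_iff [DecidableEq κ'] (lam : ℝ) {ν : ℝ} (hν : 0 < ν) (θ : κ → ℝ)
    (φ' : κ' → ℝ) :
    (∀ φ, dualIVObjective Φf Φg Yt θ₀ φ₀ lam ν θ φ ≤ dualIVObjective Φf Φg Yt θ₀ φ₀ lam ν θ φ') ↔
      (Φgᵀ * Φg + ν • 1) *ᵥ φ' = (Φgᵀ * Φf) *ᵥ θ + (ν • φ₀ - Φgᵀ *ᵥ Yt) := by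
  simp only [dualIVObjective_eq_concaveQuadratic_add, add_le_add_iff_right]
  exact forall_concaveQuadratic_le_iff (posDef_transpose_mul_self_add_smul_one Φg hν) _ _

theorem forall_le_dualIVObjective_iff [DecidableEq κ] (ν : ℝ) {lam : ℝ} (hlam : 0 < lam) (θ' : κ → ℝ)
    (φ : κ' → ℝ) :
    (∀ θ, dualIVObjective Φf Φg Yt θ₀ φ₀ lam ν θ' φ ≤ dualIVObjective Φf Φg Yt θ₀ φ₀ lam ν θ φ) ↔
      (lam • 1) *ᵥ θ' = lam • θ₀ - (Φfᵀ * Φg) *ᵥ φ := by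
  simp only [dualIVObjective_eq_neg_concaveQuadratic_add, add_le_add_iff_right, neg_le_neg_iff]
  exact forall_concaveQuadratic_le_iff (PosDef.one.smul hlam) _ _

end Objective

theorem stmt6_general (n m m' : ℕ)
    (Φf : Matrix (Fin n) (Fin m) ℝ) (Φg : Matrix (Fin n) (Fin m') ℝ)
    (Yt : Fin n → ℝ) (θ₀ : Fin m → ℝ) (φ₀ : Fin m' → ℝ)
    (lam ν : ℝ) (hlam : 0 < lam) (hν : 0 < ν) :
    let L : (Fin m → ℝ) → (Fin m' → ℝ) → ℝ := fun θ φ =>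
      (Φf *ᵥ θ) ⬝ᵥ (Φg *ᵥ φ) - Yt ⬝ᵥ (Φg *ᵥ φ)
        - (1 / 2) * ((Φg *ᵥ φ) ⬝ᵥ (Φg *ᵥ φ))
        - (ν / 2) * ((φ - φ₀) ⬝ᵥ (φ - φ₀))
        + (lam / 2) * ((θ - θ₀) ⬝ᵥ (θ - θ₀))
    let Lmat : Matrix (Fin n) (Fin n) ℝ :=
      Φg * (Φgᵀ * Φg + ν • (1 : Matrix (Fin m') (Fin m') ℝ))⁻¹ * Φgᵀ
    let θstar : Fin m → ℝ :=
      (Φfᵀ * Lmat * Φf + lam • (1 : Matrix (Fin m) (Fin m) ℝ))⁻¹ *ᵥ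
        (Φfᵀ *ᵥ (Lmat *ᵥ Yt)
          - ν • ((Φfᵀ * Φg * (Φgᵀ * Φg + ν • (1 : Matrix (Fin m') (Fin m') ℝ))⁻¹) *ᵥ φ₀)
          + lam • θ₀)
    let φstar : Fin m' → ℝ :=
      (Φgᵀ * Φg + ν • (1 : Matrix (Fin m') (Fin m') ℝ))⁻¹ *ᵥ
        (Φgᵀ *ᵥ (Φf *ᵥ θstar - Yt) + ν • φ₀)
    ((∀ φ : Fin m' → ℝ, L θstar φ ≤ L θstar φstar) ∧
      (∀ θ : Fin m → ℝ, L θstar φstar ≤ L θ φstar)) ∧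
    (∀ (θ' : Fin m → ℝ) (φ' : Fin m' → ℝ),
      ((∀ φ : Fin m' → ℝ, L θ' φ ≤ L θ' φ') ∧ (∀ θ : Fin m → ℝ, L θ' φ' ≤ L θ φ')) →
        θ' = θstar ∧ φ' = φstar) := by
  intro L Lmat θstar φstar
  set A := Φgᵀ * Φg + ν • (1 : Matrix (Fin m') (Fin m') ℝ)
  have hA : A.PosDef := posDef_transpose_mul_self_add_smul_one Φg hν
  have hS : (Φfᵀ * Φg * A⁻¹ * (Φgᵀ * Φf) + lam • 1).PosDef := by
    have hLmat : Lmat.PosSemidef := by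
      simpa [conjTranspose_eq_transpose_of_trivial] using
        hA.inv.posSemidef.mul_mul_conjTranspose_same Φg
    simpa [Lmat, Matrix.mul_assoc, conjTranspose_eq_transpose_of_trivial] using
      PosDef.posSemidef_add (hLmat.conjTranspose_mul_mul_same Φf) (PosDef.one.smul hlam)
  have hθstar : θstar = (Φfᵀ * Φg * A⁻¹ * (Φgᵀ * Φf) + lam • 1)⁻¹ *ᵥ
      (lam • θ₀ - (Φfᵀ * Φg) *ᵥ (A⁻¹ *ᵥ (ν • φ₀ - Φgᵀ *ᵥ Yt))) := by
    simp only [θstar, Lmat, A, Matrix.mul_assoc]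
    congr 1
    simp only [← mulVec_mulVec, mulVec_sub, mulVec_smul]
    abel
  have hφstar : φstar = A⁻¹ *ᵥ ((Φgᵀ * Φf) *ᵥ θstar + (ν • φ₀ - Φgᵀ *ᵥ Yt)) := by
    simp only [φstar, A, mulVec_sub, mulVec_mulVec]
    congr 1
    abel
  have hsaddle (θ' : Fin m → ℝ) (φ' : Fin m' → ℝ) :
      ((∀ φ, dualIVObjective Φf Φg Yt θ₀ φ₀ lam ν θ' φ ≤
          dualIVObjective Φf Φg Yt θ₀ φ₀ lam ν θ' φ') ∧
        ∀ θ, dualIVObjective Φf Φg Yt θ₀ φ₀ lam ν θ' φ' ≤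
          dualIVObjective Φf Φg Yt θ₀ φ₀ lam ν θ φ') ↔ θ' = θstar ∧ φ' = φstar := by
    rw [forall_dualIVObjective_le_iff Φf Φg Yt θ₀ φ₀ lam hν,
      forall_le_dualIVObjective_iff Φf Φg Yt θ₀ φ₀ ν hlam,
      mulVec_eq_and_mulVec_eq_iff _ _ _ _ hA.isUnit hS.isUnit, ← hθstar]
    exact and_congr_right fun hθ => by rw [hφstar, hθ]
  exact ⟨(hsaddle θstar φstar).mpr ⟨rfl, rfl⟩, fun θ' φ' => (hsaddle θ' φ').mp⟩

/-- `(θ*, φ*)` is the unique saddle point of the randomized-prior minimax objective `𝓛`. -/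
theorem stmt6 (n m m' : ℕ) (hn : 0 < n) (hm : 0 < m) (hm' : 0 < m')
    (Φf : Matrix (Fin n) (Fin m) ℝ) (Φg : Matrix (Fin n) (Fin m') ℝ)
    (Yt : Fin n → ℝ) (θ₀ : Fin m → ℝ) (φ₀ : Fin m' → ℝ)
    (lam ν : ℝ) (hlam : 0 < lam) (hν : 0 < ν) :
    let L : (Fin m → ℝ) → (Fin m' → ℝ) → ℝ := fun θ φ =>
      (Φf *ᵥ θ) ⬝ᵥ (Φg *ᵥ φ) - Yt ⬝ᵥ (Φg *ᵥ φ)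
        - (1 / 2) * ((Φg *ᵥ φ) ⬝ᵥ (Φg *ᵥ φ))
        - (ν / 2) * ((φ - φ₀) ⬝ᵥ (φ - φ₀))
        + (lam / 2) * ((θ - θ₀) ⬝ᵥ (θ - θ₀))
    let Lmat : Matrix (Fin n) (Fin n) ℝ :=
      Φg * (Φgᵀ * Φg + ν • (1 : Matrix (Fin m') (Fin m') ℝ))⁻¹ * Φgᵀ
    let θstar : Fin m → ℝ :=
      (Φfᵀ * Lmat * Φf + lam • (1 : Matrix (Fin m) (Fin m) ℝ))⁻¹ *ᵥ
        (Φfᵀ *ᵥ (Lmat *ᵥ Yt)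
          - ν • ((Φfᵀ * Φg * (Φgᵀ * Φg + ν • (1 : Matrix (Fin m') (Fin m') ℝ))⁻¹) *ᵥ φ₀)
          + lam • θ₀)
    let φstar : Fin m' → ℝ :=
      (Φgᵀ * Φg + ν • (1 : Matrix (Fin m') (Fin m') ℝ))⁻¹ *ᵥ
        (Φgᵀ *ᵥ (Φf *ᵥ θstar - Yt) + ν • φ₀)
    ((∀ φ : Fin m' → ℝ, L θstar φ ≤ L θstar φstar) ∧
      (∀ θ : Fin m → ℝ, L θstar φstar ≤ L θ φstar)) ∧
    (∀ (θ' : Fin m → ℝ) (φ' : Fin m' → ℝ),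
      ((∀ φ : Fin m' → ℝ, L θ' φ ≤ L θ' φ') ∧ (∀ θ : Fin m → ℝ, L θ' φ' ≤ L θ φ')) →
        θ' = θstar ∧ φ' = φstar) :=
  stmt6_general n m m' Φf Φg Yt θ₀ φ₀ lam ν hlam hν
end

section
/- Fix integers n ≥ 1, m ≥ 1, m' ≥ 1, matrices Φ_f ∈ ℝ^{n×m} and Φ_g ∈ ℝ^{n×m'}, reals λ > 0, ν > 0, and a vector k* ∈ ℝᵐ. Define L := Φ_g(Φ_gᵀΦ_g + νI_{m'})⁻¹Φ_gᵀ, B := Φ_fᵀLΦ_f + λIₘ, A := B⁻¹Φ_fᵀL, C := Iₘ − AΦ_f, and ΔC := λν B⁻¹Φ_fᵀΦ_g((Φ_gᵀΦ_g + νI_{m'})⁻¹)²Φ_gᵀΦ_f B⁻¹. Let ε be a square-integrable random vector in ℝⁿ on some probability space with E[ε] = 0 and E[εεᵀ] = λIₙ. Then ΔC is positive semidefinite and sup over f₀ ∈ ℝᵐ with ‖f₀‖ = 1 of E[(k*ᵀ(A(Φ_f f₀ + ε) − f₀))²] equals k*ᵀC k* − k*ᵀΔC k*; in particular this supremum is at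 most k*ᵀC k*. -/
/-!
Because `B = Φ_fᵀ L Φ_f + λI`, the bias matrix is `C = I − AΦ_f = λB⁻¹`, and the error splits as
`k*ᵀ(A(Φ_f f₀ + ε) − f₀) = −(k*ᵀC) f₀ + (Aᵀk*)ᵀε`. Its mean square is `(k*ᵀC f₀)² + λ‖Aᵀk*‖²`,
which by Cauchy–Schwarz is maximised on the unit sphere at `f₀ ∥ Cᵀk*`, with value
`k*ᵀ(CCᵀ + λAAᵀ)k*`. Since `L` is a ridge smoother, `L − L² = ν Φ_g N⁻² Φ_gᵀ` with
`N = Φ_gᵀΦ_g + νI`, and expanding `λAAᵀ = λB⁻¹Φ_fᵀL²Φ_fB⁻¹` around `Φ_fᵀLΦ_f = B − λI` gives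
`CCᵀ + λAAᵀ = C − λB⁻¹Φ_fᵀ(L − L²)Φ_fB⁻¹ = C − ΔC`; the last matrix is a congruence of the
positive semidefinite `L − L²`.
-/

open Matrix MeasureTheory

lemma dotProduct_mul_transpose_mulVec {R m n : Type*} [CommSemiring R] [Fintype m] [Fintype n]
    (M : Matrix m n R) (v : m → R) : v ⬝ᵥ ((M * Mᵀ) *ᵥ v) = (v ᵥ* M) ⬝ᵥ (v ᵥ* M) := by
  rw [← mulVec_mulVec, dotProduct_mulVec, mulVec_transpose]

section Quadratic

variable {ι : Type*} [Fintype ι]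

lemma sq_dotProduct_le (u f : ι → ℝ) : (u ⬝ᵥ f) ^ 2 ≤ (u ⬝ᵥ u) * (f ⬝ᵥ f) := by
  simpa only [dotProduct, sq] using Finset.sum_mul_sq_le_sq_mul_sq Finset.univ u f

lemma isGreatest_sq_dotProduct_add [Nonempty ι] (u : ι → ℝ) (c : ℝ) :
    IsGreatest {x | ∃ f : ι → ℝ, f ⬝ᵥ f = 1 ∧ x = (u ⬝ᵥ f) ^ 2 + c} (u ⬝ᵥ u + c) := by
  refine ⟨?_, ?_⟩
  · rcases eq_or_ne u 0 with rfl | hu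
    · classical
      obtain ⟨i⟩ := ‹Nonempty ι›
      exact ⟨Pi.single i 1, by simp, by simp⟩
    · have hpos : 0 < u ⬝ᵥ u :=
        (by simpa using dotProduct_star_self_nonneg u : 0 ≤ u ⬝ᵥ u).lt_of_ne'
          (dotProduct_self_eq_zero.not.mpr hu)
      refine ⟨(√(u ⬝ᵥ u))⁻¹ • u, ?_, ?_⟩
      · rw [smul_dotProduct, dotProduct_smul, smul_eq_mul, smul_eq_mul, ← mul_assoc, ← mul_inv,
          Real.mul_self_sqrt hpos.le, inv_mul_cancel₀ hpos.ne']
      · rw [dotProduct_smul, smul_eq_mul, mul_pow, inv_pow, Real.sq_sqrt hpos.le, sq, ← mul_assoc,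
          inv_mul_cancel₀ hpos.ne', one_mul]
  · rintro x ⟨f, hf, rfl⟩
    simpa [hf] using sq_dotProduct_le u f

end Quadratic

section Moments

variable {Ω ι : Type*} [Fintype ι] [MeasurableSpace Ω] {μ : Measure Ω} {ε : Ω → ι → ℝ}

lemma integral_dotProduct (hint : ∀ i, Integrable (fun ω => ε ω i) μ) (w : ι → ℝ) :
    ∫ ω, w ⬝ᵥ ε ω ∂μ = w ⬝ᵥ fun i => ∫ ω, ε ω i ∂μ := by
  simp only [dotProduct]
  rw [integral_finsetSum _ fun i _ => (hint i).const_mul _]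
  simp only [integral_const_mul]

lemma integral_dotProduct_sq {Γ : Matrix ι ι ℝ}
    (hint : ∀ i j, Integrable (fun ω => ε ω i * ε ω j) μ)
    (hcov : ∀ i j, ∫ ω, ε ω i * ε ω j ∂μ = Γ i j) (w : ι → ℝ) :
    ∫ ω, (w ⬝ᵥ ε ω) ^ 2 ∂μ = w ⬝ᵥ (Γ *ᵥ w) := by
  have hexp : ∀ ω, (w ⬝ᵥ ε ω) ^ 2 = ∑ i, ∑ j, w i * w j * (ε ω i * ε ω j) := fun ω => by
    simp only [sq, dotProduct, Finset.sum_mul_sum]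
    exact Finset.sum_congr rfl fun i _ => Finset.sum_congr rfl fun j _ => by ring
  simp only [hexp]
  rw [integral_finsetSum _ fun i _ => integrable_finsetSum _ fun j _ => (hint i j).const_mul _]
  simp only [integral_finsetSum _ fun j _ => (hint _ j).const_mul _, integral_const_mul, hcov,
    dotProduct, mulVec, Finset.mul_sum]
  exact Finset.sum_congr rfl fun i _ => Finset.sum_congr rfl fun j _ => by ring

variable [IsProbabilityMeasure μ]

lemma integral_sq_add_dotProduct {Γ : Matrix ι ι ℝ}
    (hint₁ : ∀ i, Integrable (fun ω => ε ω i) μ)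
    (hint₂ : ∀ i j, Integrable (fun ω => ε ω i * ε ω j) μ)
    (hmean : ∀ i, ∫ ω, ε ω i ∂μ = 0) (hcov : ∀ i j, ∫ ω, ε ω i * ε ω j ∂μ = Γ i j)
    (c : ℝ) (w : ι → ℝ) :
    ∫ ω, (c + w ⬝ᵥ ε ω) ^ 2 ∂μ = c ^ 2 + w ⬝ᵥ (Γ *ᵥ w) := by
  have hlin : Integrable (fun ω => w ⬝ᵥ ε ω) μ :=
    integrable_finsetSum _ fun i _ => (hint₁ i).const_mul _
  have hquad : Integrable (fun ω => (w ⬝ᵥ ε ω) ^ 2) μ := by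
    simp only [sq, dotProduct, Finset.sum_mul_sum]
    exact integrable_finsetSum _ fun i _ => integrable_finsetSum _ fun j _ => by
      simpa only [mul_mul_mul_comm] using (hint₂ i j).const_mul (w i * w j)
  have hexp : ∀ ω, (c + w ⬝ᵥ ε ω) ^ 2 = c ^ 2 + (2 * c * (w ⬝ᵥ ε ω) + (w ⬝ᵥ ε ω) ^ 2) :=
    fun ω => by ring
  have hsum : Integrable (fun ω => 2 * c * (w ⬝ᵥ ε ω) + (w ⬝ᵥ ε ω) ^ 2) μ :=
    (hlin.const_mul _).add hquad
  simp only [hexp]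
  rw [integral_add (integrable_const _) hsum,
    integral_add (hlin.const_mul _) hquad, integral_const_mul, integral_dotProduct hint₁,
    integral_dotProduct_sq hint₂ hcov]
  simp [hmean]

lemma integral_sq_dotProduct_mulVec_add_sub {m : Type*} [Fintype m] [DecidableEq m]
    {Γ : Matrix ι ι ℝ} (hint₁ : ∀ i, Integrable (fun ω => ε ω i) μ)
    (hint₂ : ∀ i j, Integrable (fun ω => ε ω i * ε ω j) μ)
    (hmean : ∀ i, ∫ ω, ε ω i ∂μ = 0) (hcov : ∀ i j, ∫ ω, ε ω i * ε ω j ∂μ = Γ i j)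
    (A : Matrix m ι ℝ) (Φ : Matrix ι m ℝ) (k f : m → ℝ) :
    ∫ ω, (k ⬝ᵥ (A *ᵥ (Φ *ᵥ f + ε ω) - f)) ^ 2 ∂μ =
      ((k ᵥ* (1 - A * Φ)) ⬝ᵥ f) ^ 2 + (k ᵥ* A) ⬝ᵥ (Γ *ᵥ (k ᵥ* A)) := by
  have hsplit : ∀ ω, k ⬝ᵥ (A *ᵥ (Φ *ᵥ f + ε ω) - f) =
      -((k ᵥ* (1 - A * Φ)) ⬝ᵥ f) + (k ᵥ* A) ⬝ᵥ ε ω := fun ω => by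
    simp only [mulVec_add, dotProduct_add, dotProduct_sub, dotProduct_mulVec, vecMul_sub,
      sub_dotProduct, vecMul_one, vecMul_vecMul]
    ring
  simp only [hsplit, integral_sq_add_dotProduct hint₁ hint₂ hmean hcov, neg_sq]

end Moments

lemma Matrix.PosSemidef.transpose_mul_mul_same {n m : Type*} [Fintype n] [Fintype m]
    {M : Matrix n n ℝ} (hM : M.PosSemidef) (Φ : Matrix n m ℝ) : (Φᵀ * M * Φ).PosSemidef := by
  simpa only [conjTranspose_eq_transpose_of_trivial] using hM.conjTranspose_mul_mul_same Φ

lemma Matrix.PosSemidef.mul_mul_transpose_same {n m : Type*} [Fintype n] [Fintype m]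
    {M : Matrix n n ℝ} (hM : M.PosSemidef) (Φ : Matrix m n ℝ) : (Φ * M * Φᵀ).PosSemidef := by
  simpa only [conjTranspose_eq_transpose_of_trivial] using hM.mul_mul_conjTranspose_same Φ

lemma Matrix.PosSemidef.inv_mul_transpose_mul_mul_mul_inv {n m : Type*} [Fintype n] [Fintype m]
    [DecidableEq m] {M : Matrix n n ℝ} (hM : M.PosSemidef) {B : Matrix m m ℝ} (hB : B.IsSymm)
    (Φ : Matrix n m ℝ) : (B⁻¹ * Φᵀ * M * Φ * B⁻¹).PosSemidef := by
  have hBinv : B⁻¹ᵀ = B⁻¹ := by rw [transpose_nonsing_inv, hB.eq]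
  simpa only [transpose_mul, hBinv, Matrix.mul_assoc] using hM.transpose_mul_mul_same (Φ * B⁻¹)

section Ridge

variable {n k : Type*} [Fintype n] [Fintype k] [DecidableEq k]

noncomputable def ridgeSmoother (Φ : Matrix n k ℝ) (ν : ℝ) : Matrix n n ℝ :=
  Φ * (Φᵀ * Φ + ν • 1)⁻¹ * Φᵀ

variable (Φ : Matrix n k ℝ) {ν : ℝ}

lemma posDef_transpose_mul_self_add_smul_one_s9 (hν : 0 < ν) : (Φᵀ * Φ + ν • 1).PosDef :=
  PosDef.posSemidef_add (by simpa only [conjTranspose_eq_transpose_of_trivial] using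
    posSemidef_conjTranspose_mul_self Φ) (PosDef.one.smul hν)

lemma ridgeSmoother_posSemidef (hν : 0 < ν) : (ridgeSmoother Φ ν).PosSemidef :=
  (posDef_transpose_mul_self_add_smul_one_s9 Φ hν).inv.posSemidef.mul_mul_transpose_same Φ

lemma ridgeSmoother_sub_mul_self (hν : 0 < ν) :
    ridgeSmoother Φ ν - ridgeSmoother Φ ν * ridgeSmoother Φ ν =
      ν • (Φ * (Φᵀ * Φ + ν • 1)⁻¹ ^ 2 * Φᵀ) := by
  set N := Φᵀ * Φ + ν • (1 : Matrix k k ℝ) with hN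
  have hNu : IsUnit N.det :=
    (isUnit_iff_isUnit_det N).mp (posDef_transpose_mul_self_add_smul_one_s9 Φ hν).isUnit
  have hcore : N⁻¹ * (Φᵀ * Φ) * N⁻¹ = N⁻¹ - ν • N⁻¹ ^ 2 := by
    rw [show Φᵀ * Φ = N - ν • 1 by rw [hN, add_sub_cancel_right], Matrix.mul_sub,
      nonsing_inv_mul N hNu, Matrix.sub_mul, Matrix.one_mul, Matrix.mul_smul, Matrix.smul_mul,
      Matrix.mul_one, sq]
  have hsq : ridgeSmoother Φ ν * ridgeSmoother Φ ν = Φ * (N⁻¹ * (Φᵀ * Φ) * N⁻¹) * Φᵀ := by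
    simp only [ridgeSmoother, ← hN, Matrix.mul_assoc]
  rw [hsq, hcore, Matrix.mul_sub, Matrix.sub_mul, Matrix.mul_smul, Matrix.smul_mul, ridgeSmoother,
    sub_sub_cancel]

lemma ridgeSmoother_sub_mul_self_posSemidef (hν : 0 < ν) :
    (ridgeSmoother Φ ν - ridgeSmoother Φ ν * ridgeSmoother Φ ν).PosSemidef := by
  rw [ridgeSmoother_sub_mul_self Φ hν]
  exact (((posDef_transpose_mul_self_add_smul_one_s9 Φ hν).inv.posSemidef.pow 2
    ).mul_mul_transpose_same Φ).smul hν.le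

end Ridge

section DualIV

variable {n m : Type*} [Fintype n] [Fintype m] [DecidableEq m]
  {Φ : Matrix n m ℝ} {L : Matrix n n ℝ} {B : Matrix m m ℝ} {A : Matrix m n ℝ} {lam : ℝ}

lemma one_sub_mul_eq_smul_inv (hBu : IsUnit B.det) (hB : B = Φᵀ * L * Φ + lam • 1)
    (hA : A = B⁻¹ * Φᵀ * L) : 1 - A * Φ = lam • B⁻¹ := by
  have hAΦ : A * Φ = B⁻¹ * (B - lam • 1) := by
    rw [hA, hB, add_sub_cancel_right, Matrix.mul_assoc, Matrix.mul_assoc, Matrix.mul_assoc]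
  rw [hAΦ, Matrix.mul_sub, nonsing_inv_mul B hBu, Matrix.mul_smul, Matrix.mul_one, sub_sub_cancel]

lemma mul_transpose_add_smul_mul_transpose (hBu : IsUnit B.det) (hL : L.IsSymm)
    (hB : B = Φᵀ * L * Φ + lam • 1) (hA : A = B⁻¹ * Φᵀ * L) :
    (1 - A * Φ) * (1 - A * Φ)ᵀ + lam • (A * Aᵀ) =
      (1 - A * Φ) - lam • (B⁻¹ * Φᵀ * (L - L * L) * Φ * B⁻¹) := by
  have hBinv : B⁻¹ᵀ = B⁻¹ := by
    rw [transpose_nonsing_inv, hB, transpose_add, transpose_mul, transpose_mul, hL.eq,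
      transpose_transpose, transpose_smul, transpose_one, Matrix.mul_assoc]
  have hAt : Aᵀ = L * Φ * B⁻¹ := by
    rw [hA, transpose_mul, transpose_mul, hL.eq, hBinv, transpose_transpose, Matrix.mul_assoc]
  have hΦLΦ : Φᵀ * L * Φ = B - lam • 1 := by rw [hB, add_sub_cancel_right]
  have hsplit : B⁻¹ * Φᵀ * (L - L * L) * Φ * B⁻¹ =
      B⁻¹ * (Φᵀ * L * Φ) * B⁻¹ - A * Aᵀ := by
    rw [hAt, hA]
    simp only [Matrix.mul_sub, Matrix.sub_mul, Matrix.mul_assoc]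
  rw [hsplit, hΦLΦ, one_sub_mul_eq_smul_inv hBu hB hA, transpose_smul, hBinv, Matrix.mul_sub,
    Matrix.sub_mul, nonsing_inv_mul B hBu, Matrix.one_mul]
  simp only [Matrix.mul_smul, Matrix.smul_mul, Matrix.mul_one]
  module

end DualIV

theorem stmt9_general (n m m' : ℕ) (hm : 0 < m)
    (Φf : Matrix (Fin n) (Fin m) ℝ) (Φg : Matrix (Fin n) (Fin m') ℝ)
    (lam ν : ℝ) (hlam : 0 < lam) (hν : 0 < ν) (ks : Fin m → ℝ)
    {Ω : Type*} [MeasureSpace Ω] [IsProbabilityMeasure (volume : Measure Ω)]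
    (ε : Ω → (Fin n → ℝ))
    (hint1 : ∀ i, Integrable fun ω => ε ω i)
    (hint2 : ∀ i j, Integrable fun ω => ε ω i * ε ω j)
    (hmean : ∀ i, ∫ ω, ε ω i = 0)
    (hcov : ∀ i j, ∫ ω, ε ω i * ε ω j = lam * (if i = j then 1 else 0)) :
    let L : Matrix (Fin n) (Fin n) ℝ :=
      Φg * (Φgᵀ * Φg + ν • (1 : Matrix (Fin m') (Fin m') ℝ))⁻¹ * Φgᵀ
    let B : Matrix (Fin m) (Fin m) ℝ := Φfᵀ * L * Φf + lam • (1 : Matrix (Fin m) (Fin m) ℝ)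
    let A : Matrix (Fin m) (Fin n) ℝ := B⁻¹ * Φfᵀ * L
    let C : Matrix (Fin m) (Fin m) ℝ := (1 : Matrix (Fin m) (Fin m) ℝ) - A * Φf
    let ΔC : Matrix (Fin m) (Fin m) ℝ := (lam * ν) •
      (B⁻¹ * Φfᵀ * Φg * ((Φgᵀ * Φg + ν • (1 : Matrix (Fin m') (Fin m') ℝ))⁻¹ ^ 2)
        * Φgᵀ * Φf * B⁻¹)
    let S : Set ℝ := {x : ℝ | ∃ f₀ : Fin m → ℝ, f₀ ⬝ᵥ f₀ = 1 ∧
      x = ∫ ω, (ks ⬝ᵥ (A *ᵥ (Φf *ᵥ f₀ + ε ω) - f₀)) ^ 2}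
    ΔC.PosSemidef ∧
    IsGreatest S (ks ⬝ᵥ (C *ᵥ ks) - ks ⬝ᵥ (ΔC *ᵥ ks)) ∧
    (∀ x ∈ S, x ≤ ks ⬝ᵥ (C *ᵥ ks)) := by
  intro L B A C ΔC S
  have hL : L.PosSemidef := ridgeSmoother_posSemidef Φg hν
  have hB : B.PosDef :=
    PosDef.posSemidef_add (hL.transpose_mul_mul_same Φf) (PosDef.one.smul hlam)
  have hΔC : ΔC = lam • (B⁻¹ * Φfᵀ * (L - L * L) * Φf * B⁻¹) := by
    have hLL : L - L * L = ν • (Φg * (Φgᵀ * Φg + ν • 1)⁻¹ ^ 2 * Φgᵀ) :=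
      ridgeSmoother_sub_mul_self Φg hν
    simp only [hLL, Matrix.mul_smul, Matrix.smul_mul, smul_smul, Matrix.mul_assoc, ΔC]
  have hΔC_psd : ΔC.PosSemidef := hΔC ▸ ((ridgeSmoother_sub_mul_self_posSemidef Φg hν
    ).inv_mul_transpose_mul_mul_mul_inv (isHermitian_iff_isSymm.mp hB.isHermitian) Φf).smul hlam.le
  have hvar : ks ⬝ᵥ (C *ᵥ ks) - ks ⬝ᵥ (ΔC *ᵥ ks) =
      (ks ᵥ* C) ⬝ᵥ (ks ᵥ* C) + lam * ((ks ᵥ* A) ⬝ᵥ (ks ᵥ* A)) := by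
    rw [← dotProduct_sub, ← sub_mulVec, hΔC, ← mul_transpose_add_smul_mul_transpose
      ((isUnit_iff_isUnit_det B).mp hB.isUnit) (isHermitian_iff_isSymm.mp hL.isHermitian) rfl rfl,
      add_mulVec, dotProduct_add, smul_mulVec, dotProduct_smul, smul_eq_mul,
      dotProduct_mul_transpose_mulVec, dotProduct_mul_transpose_mulVec]
  have hS : S = {x | ∃ f₀ : Fin m → ℝ, f₀ ⬝ᵥ f₀ = 1 ∧
      x = ((ks ᵥ* C) ⬝ᵥ f₀) ^ 2 + lam * ((ks ᵥ* A) ⬝ᵥ (ks ᵥ* A))} := by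
    have hcov' : ∀ i j, ∫ ω, ε ω i * ε ω j = (lam • (1 : Matrix (Fin n) (Fin n) ℝ)) i j :=
      fun i j => by simp [hcov, one_apply]
    simp only [S, integral_sq_dotProduct_mulVec_add_sub hint1 hint2 hmean hcov', smul_mulVec,
      one_mulVec, dotProduct_smul, smul_eq_mul]
    rfl
  have : Nonempty (Fin m) := ⟨⟨0, hm⟩⟩
  have hmax : IsGreatest S (ks ⬝ᵥ (C *ᵥ ks) - ks ⬝ᵥ (ΔC *ᵥ ks)) :=
    hS ▸ hvar ▸ isGreatest_sq_dotProduct_add _ _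
  refine ⟨hΔC_psd, hmax, fun x hx => (hmax.2 hx).trans (sub_le_self _ ?_)⟩
  simpa using hΔC_psd.dotProduct_mulVec_nonneg ks

/-- Unconfounded error representation of the quasi-Bayesian dual IV posterior covariance:
`ΔC` is positive semidefinite, and the supremum over unit-norm `f₀` of the expected squared
prediction error `E[(k*ᵀ(A(Φ_f f₀ + ε) − f₀))²]` is attained and equals
`k*ᵀCk* − k*ᵀΔCk*`; in particular it is at most `k*ᵀCk*`. -/
theorem stmt9 (n m m' : ℕ) (hn : 0 < n) (hm : 0 < m) (hm' : 0 < m')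
    (Φf : Matrix (Fin n) (Fin m) ℝ) (Φg : Matrix (Fin n) (Fin m') ℝ)
    (lam ν : ℝ) (hlam : 0 < lam) (hν : 0 < ν) (ks : Fin m → ℝ)
    {Ω : Type*} [MeasureSpace Ω] [IsProbabilityMeasure (volume : Measure Ω)]
    (ε : Ω → (Fin n → ℝ)) (hmeas : Measurable ε)
    (hint1 : ∀ i, Integrable fun ω => ε ω i)
    (hint2 : ∀ i j, Integrable fun ω => ε ω i * ε ω j)
    (hmean : ∀ i, ∫ ω, ε ω i = 0)
    (hcov : ∀ i j, ∫ ω, ε ω i * ε ω j = lam * (if i = j then 1 else 0)) :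
    let L : Matrix (Fin n) (Fin n) ℝ :=
      Φg * (Φgᵀ * Φg + ν • (1 : Matrix (Fin m') (Fin m') ℝ))⁻¹ * Φgᵀ
    let B : Matrix (Fin m) (Fin m) ℝ := Φfᵀ * L * Φf + lam • (1 : Matrix (Fin m) (Fin m) ℝ)
    let A : Matrix (Fin m) (Fin n) ℝ := B⁻¹ * Φfᵀ * L
    let C : Matrix (Fin m) (Fin m) ℝ := (1 : Matrix (Fin m) (Fin m) ℝ) - A * Φf
    let ΔC : Matrix (Fin m) (Fin m) ℝ := (lam * ν) •
      (B⁻¹ * Φfᵀ * Φg * ((Φgᵀ * Φg + ν • (1 : Matrix (Fin m') (Fin m') ℝ))⁻¹ ^ 2)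
        * Φgᵀ * Φf * B⁻¹)
    let S : Set ℝ := {x : ℝ | ∃ f₀ : Fin m → ℝ, f₀ ⬝ᵥ f₀ = 1 ∧
      x = ∫ ω, (ks ⬝ᵥ (A *ᵥ (Φf *ᵥ f₀ + ε ω) - f₀)) ^ 2}
    ΔC.PosSemidef ∧
    IsGreatest S (ks ⬝ᵥ (C *ᵥ ks) - ks ⬝ᵥ (ΔC *ᵥ ks)) ∧
    (∀ x ∈ S, x ≤ ks ⬝ᵥ (C *ᵥ ks)) :=
  stmt9_general n m m' hm Φf Φg lam ν hlam hν ks ε hint1 hint2 hmean hcov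
end

section
/- Let 𝒳 and 𝒵 be nonempty types, n, l ≥ 1 integers, x₁,…,xₙ ∈ 𝒳, z₁,…,zₙ ∈ 𝒵 fixed training points, Y ∈ ℝⁿ, λ > 0, ν > 0, and κ > 0. Let k_x and, for each positive integer M, k_x^{(M)} be symmetric positive semidefinite kernels on 𝒳 (every Gram matrix of a finite tuple of points is positive semidefinite) bounded in absolute value by κ, and similarly k_z, k_z^{(M)} on 𝒵. For a kernel pair (k_x, k_z) and test points x* = (x*₁,…,x*ₗ) ∈ 𝒳ˡ, define K_{zz} := (k_z(z_i,z_j))_{i,j}, L := K_{zz}(K_{zz}+νIₙ)⁻¹, K_{xx} := (k_x(x_i,x_j))_{i,j}, K_{*x} := (k_x(x*_a,x_j))_{a,j}, K_{**} := (k_x(x*_a,x*_b))_{a,b}, μ(x*) := K_{*x}(λIₙ + LK_{xx})⁻¹LY and S(x*) := K_{**} − K_{*x}L(λIₙ + K_{xx}L)⁻¹K_{x*} (these inverses exist since the kernels are positive semidefinite and λ, ν > 0); define μ_M(x*), S_M(x*) by the same formulas with (k_x^{(M)}, k_z^{(M)}) in place of (k_x, k_z). If sup_{x,x'∈𝒳}|k_x(x,x')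 − k_x^{(M)}(x,x')| → 0 and sup_{z,z'∈𝒵}|k_z(z,z') − k_z^{(M)}(z,z')| → 0 as M → ∞, then sup_{x*∈𝒳ˡ} ‖μ_M(x*) − μ(x*)‖₂ → 0 and sup_{x*∈𝒳ˡ} ‖S_M(x*) − S(x*)‖_F → 0, where ‖·‖₂ is the Euclidean norm and ‖·‖_F the Frobenius norm. -/
open Matrix Filter

set_option linter.unusedSectionVars false
set_option maxHeartbeats 1000000

section Aux

variable {ι κ' ρ : Type*} [Fintype ι] [Fintype κ'] [Fintype ρ] [DecidableEq ι]

lemma myPosDef_smul_one {c : ℝ} (hc : 0 < c) :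
    (c • (1 : Matrix ι ι ℝ)).PosDef := by
  rw [Matrix.smul_one_eq_diagonal]
  exact .diagonal fun _ => hc

lemma myPSD_smul {M : Matrix ι ι ℝ} (hM : M.PosSemidef) {c : ℝ} (hc : 0 ≤ c) :
    (c • M).PosSemidef := by
  refine ⟨?_, fun x => ?_⟩
  · unfold Matrix.IsHermitian
    rw [Matrix.conjTranspose_smul, hM.isHermitian.eq]
    simp
  · exact (hM.smul hc).2 x

open scoped MatrixOrder in
lemma myDet_ne_zero {A B : Matrix ι ι ℝ} (hA : A.PosSemidef) (hB : B.PosSemidef)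
    {c : ℝ} (hc : 0 < c) : (c • (1 : Matrix ι ι ℝ) + A * B).det ≠ 0 := by
  set R := CFC.sqrt B with hRdef
  have hR : R.PosSemidef := (CFC.sqrt_nonneg B).posSemidef
  have hRR : R * R = B := CFC.sqrt_mul_sqrt_self B hB.nonneg
  have h1 : c • (1 : Matrix ι ι ℝ) + A * B = c • ((1 : Matrix ι ι ℝ) + c⁻¹ • (A * B)) := by
    rw [smul_add, smul_smul, mul_inv_cancel₀ hc.ne', one_smul]
  have h2 : c⁻¹ • (A * B) = (c⁻¹ • (A * R)) * R := by
    rw [Matrix.smul_mul, Matrix.mul_assoc, hRR]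
  have h3 : R * (c⁻¹ • (A * R)) = c⁻¹ • (R * A * R) := by
    rw [Matrix.mul_smul, Matrix.mul_assoc]
  have hPSD : (c⁻¹ • (R * A * R)).PosSemidef := by
    apply myPSD_smul _ (inv_nonneg.mpr hc.le)
    have := hA.mul_mul_conjTranspose_same R
    rwa [hR.isHermitian.eq] at this
  have hPD : ((1 : Matrix ι ι ℝ) + c⁻¹ • (R * A * R)).PosDef :=
    Matrix.PosDef.one.add_posSemidef hPSD
  have hdet : ((1 : Matrix ι ι ℝ) + c⁻¹ • (A * B)).det ≠ 0 := by
    rw [h2, Matrix.det_one_add_mul_comm, h3]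
    exact hPD.det_pos.ne'
  rw [h1, Matrix.det_smul]
  exact mul_ne_zero (pow_ne_zero _ hc.ne') hdet

lemma myDet_comm {A B : Matrix ι ι ℝ} {c : ℝ} (hc : c ≠ 0) :
    (c • (1 : Matrix ι ι ℝ) + A * B).det = (c • (1 : Matrix ι ι ℝ) + B * A).det := by
  have h1 : ∀ X Y : Matrix ι ι ℝ, c • (1 : Matrix ι ι ℝ) + X * Y
      = c • ((1 : Matrix ι ι ℝ) + (c⁻¹ • X) * Y) := by
    intro X Y
    rw [smul_add, Matrix.smul_mul, smul_smul, mul_inv_cancel₀ hc, one_smul]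
  rw [h1 A B, h1 B A, Matrix.det_smul, Matrix.det_smul]
  congr 1
  rw [Matrix.det_one_add_mul_comm]
  congr 1
  rw [Matrix.mul_smul, Matrix.smul_mul]

lemma myDet_main {Kzz Kxx : Matrix ι ι ℝ} (hz : Kzz.PosSemidef) (hx : Kxx.PosSemidef)
    {lam ν : ℝ} (hlam : 0 < lam) (hν : 0 < ν) :
    (lam • (1 : Matrix ι ι ℝ) + (Kzz * (Kzz + ν • (1 : Matrix ι ι ℝ))⁻¹) * Kxx).det ≠ 0 := by
  set P := Kzz + ν • (1 : Matrix ι ι ℝ) with hPdef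
  have hP : P.PosDef := Matrix.PosDef.posSemidef_add hz (myPosDef_smul_one hν)
  have hPdet : P.det ≠ 0 := hP.det_pos.ne'
  have hPunit : IsUnit P.det := isUnit_iff_ne_zero.mpr hPdet
  have hcomm : P * Kzz = Kzz * P := by
    rw [hPdef, add_mul, mul_add, Matrix.smul_mul, Matrix.mul_smul, one_mul, mul_one]
  have hcomm' : P * (Kzz * P⁻¹) = Kzz := by
    rw [← Matrix.mul_assoc, hcomm, Matrix.mul_assoc, Matrix.mul_nonsing_inv _ hPunit, mul_one]
  have key : P * (lam • (1 : Matrix ι ι ℝ) + (Kzz * P⁻¹) * Kxx)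
      = (lam * ν) • (1 : Matrix ι ι ℝ) + Kzz * (lam • (1 : Matrix ι ι ℝ) + Kxx) := by
    rw [mul_add, Matrix.mul_smul, mul_one, ← Matrix.mul_assoc, hcomm']
    rw [hPdef, smul_add, mul_add, smul_smul, Matrix.mul_smul, mul_one]
    rw [mul_comm lam ν, mul_comm ν lam]
    abel
  have hB : (lam • (1 : Matrix ι ι ℝ) + Kxx).PosSemidef :=
    (myPosDef_smul_one hlam).posSemidef.add hx
  have hrhs : ((lam * ν) • (1 : Matrix ι ι ℝ) + Kzz * (lam • (1 : Matrix ι ι ℝ) + Kxx)).det ≠ 0 :=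
    myDet_ne_zero hz hB (mul_pos hlam hν)
  have h := congrArg Matrix.det key
  rw [Matrix.det_mul] at h
  intro hcontra
  rw [hcontra, mul_zero] at h
  exact hrhs h.symm

lemma myTendsto_mul {A : ℕ → Matrix ι κ' ℝ} {B : ℕ → Matrix κ' ρ ℝ} {A₀ B₀}
    (hA : Tendsto A atTop (nhds A₀)) (hB : Tendsto B atTop (nhds B₀)) :
    Tendsto (fun M => A M * B M) atTop (nhds (A₀ * B₀)) := by
  have hc : Continuous fun p : Matrix ι κ' ℝ × Matrix κ' ρ ℝ => p.1 * p.2 :=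
    (continuous_fst.matrix_mul continuous_snd)
  exact (hc.tendsto (A₀, B₀)).comp (hA.prodMk_nhds hB)

lemma myTendsto_mulVec {A : ℕ → Matrix ι κ' ℝ} {A₀} {Y : κ' → ℝ}
    (hA : Tendsto A atTop (nhds A₀)) :
    Tendsto (fun M => A M *ᵥ Y) atTop (nhds (A₀ *ᵥ Y)) := by
  have hc : Continuous fun p : Matrix ι κ' ℝ => p *ᵥ Y :=
    (continuous_id.matrix_mulVec continuous_const)
  exact (hc.tendsto A₀).comp hA

lemma myTendsto_inv {A : ℕ → Matrix ι ι ℝ} {A₀}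
    (hA : Tendsto A atTop (nhds A₀)) (hd : A₀.det ≠ 0) :
    Tendsto (fun M => (A M)⁻¹) atTop (nhds A₀⁻¹) := by
  have h : ContinuousAt (Ring.inverse : ℝ → ℝ) A₀.det := by
    rw [Ring.inverse_eq_inv']
    exact continuousAt_inv₀ hd
  exact (continuousAt_matrix_inv A₀ h).tendsto.comp hA

lemma myEntry_tendsto {A : ℕ → Matrix ι κ' ℝ} {A₀}
    (h : Tendsto A atTop (nhds A₀)) (i : ι) (j : κ') :
    Tendsto (fun M => A M i j) atTop (nhds (A₀ i j)) :=
  tendsto_pi_nhds.mp (tendsto_pi_nhds.mp h i) j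

lemma myMatrix_tendsto_of_entry {A : ℕ → Matrix ι κ' ℝ} {A₀}
    (h : ∀ i j, Tendsto (fun M => A M i j) atTop (nhds (A₀ i j))) :
    Tendsto A atTop (nhds A₀) := by
  refine tendsto_pi_nhds.mpr ?_
  intro i
  refine tendsto_pi_nhds.mpr ?_
  exact h i

lemma myEntrywise {A : ℕ → Matrix ι κ' ℝ} {A₀}
    (h : Tendsto A atTop (nhds A₀)) {δ : ℝ} (hδ : 0 < δ) :
    ∃ M₀ : ℕ, ∀ M, M₀ ≤ M → ∀ i j, |A M i j - A₀ i j| ≤ δ := by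
  have h2 : ∀ i j, ∀ᶠ M in atTop, |A M i j - A₀ i j| ≤ δ := by
    intro i j
    obtain ⟨N, hN⟩ := Metric.tendsto_atTop.mp (myEntry_tendsto h i j) δ hδ
    exact eventually_atTop.mpr ⟨N, fun M hM => by
      have := hN M hM
      rw [Real.dist_eq] at this
      exact this.le⟩
  have h4 : ∀ᶠ M in atTop, ∀ i j, |A M i j - A₀ i j| ≤ δ := by
    rw [eventually_all]
    intro i
    rw [eventually_all]
    exact h2 i
  obtain ⟨N, hN⟩ := eventually_atTop.mp h4
  exact ⟨N, fun M hM => hN M hM⟩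

lemma myVec_entrywise {v : ℕ → ι → ℝ} {v₀}
    (h : Tendsto v atTop (nhds v₀)) {δ : ℝ} (hδ : 0 < δ) :
    ∃ M₀ : ℕ, ∀ M, M₀ ≤ M → ∀ i, |v M i - v₀ i| ≤ δ := by
  have h2 : ∀ i, ∀ᶠ M in atTop, |v M i - v₀ i| ≤ δ := by
    intro i
    obtain ⟨N, hN⟩ := Metric.tendsto_atTop.mp (tendsto_pi_nhds.mp h i) δ hδ
    exact eventually_atTop.mpr ⟨N, fun M hM => by
      have := hN M hM
      rw [Real.dist_eq] at this
      exact this.le⟩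
  obtain ⟨N, hN⟩ := eventually_atTop.mp (eventually_all.mpr h2)
  exact ⟨N, fun M hM => hN M hM⟩

lemma myMul3_bound {u v w a b c : ℝ} (hu : |u| ≤ a) (hv : |v| ≤ b) (hw : |w| ≤ c) :
    |u * (v * w)| ≤ a * (b * c) := by
  rw [abs_mul, abs_mul]
  exact mul_le_mul hu (mul_le_mul hv hw (abs_nonneg _) ((abs_nonneg v).trans hv))
    (mul_nonneg (abs_nonneg _) (abs_nonneg _)) ((abs_nonneg u).trans hu)

end Aux

/-- The quasi-posterior mean vector `μ(x*) = K_{*x}(λIₙ + LK_{xx})⁻¹LY` at `l` test points,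
where `L = K_{zz}(K_{zz} + νIₙ)⁻¹`. -/
noncomputable def qbMean {X Z : Type*} {n l : ℕ}
    (kx : X → X → ℝ) (kz : Z → Z → ℝ)
    (x : Fin n → X) (z : Fin n → Z) (Y : Fin n → ℝ) (lam ν : ℝ)
    (xs : Fin l → X) : Fin l → ℝ :=
  let Kzz : Matrix (Fin n) (Fin n) ℝ := Matrix.of fun i j => kz (z i) (z j)
  let L : Matrix (Fin n) (Fin n) ℝ := Kzz * (Kzz + ν • (1 : Matrix (Fin n) (Fin n) ℝ))⁻¹
  let Kxx : Matrix (Fin n) (Fin n) ℝ := Matrix.of fun i j => kx (x i) (x j)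
  let Ksx : Matrix (Fin l) (Fin n) ℝ := Matrix.of fun a j => kx (xs a) (x j)
  Ksx *ᵥ ((lam • (1 : Matrix (Fin n) (Fin n) ℝ) + L * Kxx)⁻¹ *ᵥ (L *ᵥ Y))

/-- The quasi-posterior covariance matrix
`S(x*) = K_{**} − K_{*x}L(λIₙ + K_{xx}L)⁻¹K_{x*}` at `l` test points. -/
noncomputable def qbCov {X Z : Type*} {n l : ℕ}
    (kx : X → X → ℝ) (kz : Z → Z → ℝ)
    (x : Fin n → X) (z : Fin n → Z) (lam ν : ℝ)
    (xs : Fin l → X) : Matrix (Fin l) (Fin l) ℝ :=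
  let Kzz : Matrix (Fin n) (Fin n) ℝ := Matrix.of fun i j => kz (z i) (z j)
  let L : Matrix (Fin n) (Fin n) ℝ := Kzz * (Kzz + ν • (1 : Matrix (Fin n) (Fin n) ℝ))⁻¹
  let Kxx : Matrix (Fin n) (Fin n) ℝ := Matrix.of fun i j => kx (x i) (x j)
  let Ksx : Matrix (Fin l) (Fin n) ℝ := Matrix.of fun a j => kx (xs a) (x j)
  let Kss : Matrix (Fin l) (Fin l) ℝ := Matrix.of fun a b => kx (xs a) (xs b)
  Kss - Ksx * L * (lam • (1 : Matrix (Fin n) (Fin n) ℝ) + Kxx * L)⁻¹ * Ksxᵀ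

/-- Continuity of the closed-form quasi-Bayesian dual IV posterior under uniform approximation
of the kernels: if bounded symmetric positive semidefinite kernels `k_x^{(M)}, k_z^{(M)}`
converge uniformly to `k_x, k_z`, then the posterior means converge in the Euclidean norm and
the posterior covariances converge in the Frobenius norm, uniformly over all tuples of `l`
test points. -/
theorem stmt11 {X Z : Type*} (hX : Nonempty X) (hZ : Nonempty Z)
    (n l : ℕ) (hn : 1 ≤ n) (hl : 1 ≤ l)
    (x : Fin n → X) (z : Fin n → Z) (Y : Fin n → ℝ)
    (lam ν κ : ℝ) (hlam : 0 < lam) (hν : 0 < ν) (hκ : 0 < κ)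
    (kx : X → X → ℝ) (kz : Z → Z → ℝ)
    (kxM : ℕ → X → X → ℝ) (kzM : ℕ → Z → Z → ℝ)
    (hkxsymm : ∀ a b, kx a b = kx b a)
    (hkxpsd : ∀ (N : ℕ) (pts : Fin N → X),
      (Matrix.of fun i j => kx (pts i) (pts j)).PosSemidef)
    (hkxbdd : ∀ a b, |kx a b| ≤ κ)
    (hkzsymm : ∀ a b, kz a b = kz b a)
    (hkzpsd : ∀ (N : ℕ) (pts : Fin N → Z),
      (Matrix.of fun i j => kz (pts i) (pts j)).PosSemidef)
    (hkzbdd : ∀ a b, |kz a b| ≤ κ)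
    (hkxMsymm : ∀ M, 1 ≤ M → ∀ a b, kxM M a b = kxM M b a)
    (hkxMpsd : ∀ M, 1 ≤ M → ∀ (N : ℕ) (pts : Fin N → X),
      (Matrix.of fun i j => kxM M (pts i) (pts j)).PosSemidef)
    (hkxMbdd : ∀ M, 1 ≤ M → ∀ a b, |kxM M a b| ≤ κ)
    (hkzMsymm : ∀ M, 1 ≤ M → ∀ a b, kzM M a b = kzM M b a)
    (hkzMpsd : ∀ M, 1 ≤ M → ∀ (N : ℕ) (pts : Fin N → Z),
      (Matrix.of fun i j => kzM M (pts i) (pts j)).PosSemidef)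
    (hkzMbdd : ∀ M, 1 ≤ M → ∀ a b, |kzM M a b| ≤ κ)
    (hconvx : ∀ ε : ℝ, 0 < ε → ∃ M₀ : ℕ, ∀ M, M₀ ≤ M → ∀ a b, |kx a b - kxM M a b| ≤ ε)
    (hconvz : ∀ ε : ℝ, 0 < ε → ∃ M₀ : ℕ, ∀ M, M₀ ≤ M → ∀ a b, |kz a b - kzM M a b| ≤ ε) :
    (∀ ε : ℝ, 0 < ε → ∃ M₀ : ℕ, ∀ M, M₀ ≤ M → ∀ xs : Fin l → X,
      Real.sqrt ((qbMean (kxM M) (kzM M) x z Y lam ν xs - qbMean kx kz x z Y lam ν xs) ⬝ᵥ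
        (qbMean (kxM M) (kzM M) x z Y lam ν xs - qbMean kx kz x z Y lam ν xs)) ≤ ε) ∧
    (∀ ε : ℝ, 0 < ε → ∃ M₀ : ℕ, ∀ M, M₀ ≤ M → ∀ xs : Fin l → X,
      Real.sqrt (∑ a : Fin l, ∑ b : Fin l,
        (qbCov (kxM M) (kzM M) x z lam ν xs a b - qbCov kx kz x z lam ν xs a b) ^ 2) ≤ ε) := by
  classical
  have hn' : (0:ℝ) < n := by exact_mod_cast hn
  -- limit matrices
  set Kzz : Matrix (Fin n) (Fin n) ℝ := Matrix.of fun i j => kz (z i) (z j) with hKzzdef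
  set Kxx : Matrix (Fin n) (Fin n) ℝ := Matrix.of fun i j => kx (x i) (x j) with hKxxdef
  set P : Matrix (Fin n) (Fin n) ℝ := Kzz + ν • (1 : Matrix (Fin n) (Fin n) ℝ) with hPdef
  set L : Matrix (Fin n) (Fin n) ℝ := Kzz * P⁻¹ with hLdef
  set C : Fin n → ℝ :=
    ((lam • (1 : Matrix (Fin n) (Fin n) ℝ) + L * Kxx)⁻¹ * L) *ᵥ Y with hCdef
  set D : Matrix (Fin n) (Fin n) ℝ :=
    L * (lam • (1 : Matrix (Fin n) (Fin n) ℝ) + Kxx * L)⁻¹ with hDdef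
  -- sequences
  set KzzM : ℕ → Matrix (Fin n) (Fin n) ℝ :=
    fun M => Matrix.of fun i j => kzM M (z i) (z j) with hKzzMdef
  set KxxM : ℕ → Matrix (Fin n) (Fin n) ℝ :=
    fun M => Matrix.of fun i j => kxM M (x i) (x j) with hKxxMdef
  set LM : ℕ → Matrix (Fin n) (Fin n) ℝ :=
    fun M => KzzM M * (KzzM M + ν • (1 : Matrix (Fin n) (Fin n) ℝ))⁻¹ with hLMdef
  set CM : ℕ → Fin n → ℝ := fun M =>
    ((lam • (1 : Matrix (Fin n) (Fin n) ℝ) + LM M * KxxM M)⁻¹ * LM M) *ᵥ Y with hCMdef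
  set DM : ℕ → Matrix (Fin n) (Fin n) ℝ := fun M =>
    LM M * (lam • (1 : Matrix (Fin n) (Fin n) ℝ) + KxxM M * LM M)⁻¹ with hDMdef
  -- PSD facts
  have hzpsd : Kzz.PosSemidef := hkzpsd n z
  have hxpsd : Kxx.PosSemidef := hkxpsd n x
  have hdP : P.det ≠ 0 :=
    (Matrix.PosDef.posSemidef_add hzpsd (myPosDef_smul_one hν)).det_pos.ne'
  have hd2 : (lam • (1 : Matrix (Fin n) (Fin n) ℝ) + L * Kxx).det ≠ 0 :=
    myDet_main hzpsd hxpsd hlam hν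
  have hd3 : (lam • (1 : Matrix (Fin n) (Fin n) ℝ) + Kxx * L).det ≠ 0 := by
    rw [myDet_comm hlam.ne']
    exact hd2
  -- convergence of matrices
  have hKzzT : Filter.Tendsto KzzM Filter.atTop (nhds Kzz) := by
    apply myMatrix_tendsto_of_entry
    intro i j
    rw [Metric.tendsto_atTop]
    intro ε hε
    obtain ⟨M₀, hM₀⟩ := hconvz (ε / 2) (by linarith)
    refine ⟨M₀, fun M hM => ?_⟩
    have := hM₀ M hM (z i) (z j)
    rw [Real.dist_eq]
    calc |KzzM M i j - Kzz i j| = |kz (z i) (z j) - kzM M (z i) (z j)| := by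
          rw [abs_sub_comm]; rfl
      _ ≤ ε / 2 := this
      _ < ε := by linarith
  have hKxxT : Filter.Tendsto KxxM Filter.atTop (nhds Kxx) := by
    apply myMatrix_tendsto_of_entry
    intro i j
    rw [Metric.tendsto_atTop]
    intro ε hε
    obtain ⟨M₀, hM₀⟩ := hconvx (ε / 2) (by linarith)
    refine ⟨M₀, fun M hM => ?_⟩
    have := hM₀ M hM (x i) (x j)
    rw [Real.dist_eq]
    calc |KxxM M i j - Kxx i j| = |kx (x i) (x j) - kxM M (x i) (x j)| := by
          rw [abs_sub_comm]; rfl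
      _ ≤ ε / 2 := this
      _ < ε := by linarith
  have hPT : Filter.Tendsto (fun M => KzzM M + ν • (1 : Matrix (Fin n) (Fin n) ℝ))
      Filter.atTop (nhds P) := hKzzT.add tendsto_const_nhds
  have hLT : Filter.Tendsto LM Filter.atTop (nhds L) :=
    myTendsto_mul hKzzT (myTendsto_inv hPT hdP)
  have hA2T : Filter.Tendsto (fun M => lam • (1 : Matrix (Fin n) (Fin n) ℝ) + LM M * KxxM M)
      Filter.atTop (nhds (lam • (1 : Matrix (Fin n) (Fin n) ℝ) + L * Kxx)) :=
    tendsto_const_nhds.add (myTendsto_mul hLT hKxxT)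
  have hCT : Filter.Tendsto CM Filter.atTop (nhds C) :=
    myTendsto_mulVec (myTendsto_mul (myTendsto_inv hA2T hd2) hLT)
  have hA3T : Filter.Tendsto (fun M => lam • (1 : Matrix (Fin n) (Fin n) ℝ) + KxxM M * LM M)
      Filter.atTop (nhds (lam • (1 : Matrix (Fin n) (Fin n) ℝ) + Kxx * L)) :=
    tendsto_const_nhds.add (myTendsto_mul hKxxT hLT)
  have hDT : Filter.Tendsto DM Filter.atTop (nhds D) :=
    myTendsto_mul hLT (myTendsto_inv hA3T hd3)
  -- entry formulas
  have hμM : ∀ M xs (a : Fin l), qbMean (kxM M) (kzM M) x z Y lam ν xs a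
      = ∑ j, kxM M (xs a) (x j) * CM M j := by
    intro M xs a
    show (Matrix.of (fun a j => kxM M (xs a) (x j)) *ᵥ
      ((lam • (1 : Matrix (Fin n) (Fin n) ℝ) + LM M * KxxM M)⁻¹ *ᵥ (LM M *ᵥ Y))) a
      = ∑ j, kxM M (xs a) (x j) * CM M j
    rw [Matrix.mulVec_mulVec (M := (lam • (1 : Matrix (Fin n) (Fin n) ℝ) + LM M * KxxM M)⁻¹)]
    rfl
  have hμ : ∀ xs (a : Fin l), qbMean kx kz x z Y lam ν xs a
      = ∑ j, kx (xs a) (x j) * C j := by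
    intro xs a
    show (Matrix.of (fun a j => kx (xs a) (x j)) *ᵥ
      ((lam • (1 : Matrix (Fin n) (Fin n) ℝ) + L * Kxx)⁻¹ *ᵥ (L *ᵥ Y))) a
      = ∑ j, kx (xs a) (x j) * C j
    rw [Matrix.mulVec_mulVec (M := (lam • (1 : Matrix (Fin n) (Fin n) ℝ) + L * Kxx)⁻¹)]
    rfl
  have hSM : ∀ M xs (a b : Fin l), qbCov (kxM M) (kzM M) x z lam ν xs a b
      = kxM M (xs a) (xs b) - ∑ j, (∑ i, kxM M (xs a) (x i) * DM M i j) * kxM M (xs b) (x j) := by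
    intro M xs a b
    show (Matrix.of (fun a b => kxM M (xs a) (xs b)) -
      Matrix.of (fun a j => kxM M (xs a) (x j)) * LM M *
        (lam • (1 : Matrix (Fin n) (Fin n) ℝ) + KxxM M * LM M)⁻¹ *
        (Matrix.of (fun a j => kxM M (xs a) (x j)))ᵀ) a b = _
    rw [Matrix.mul_assoc (Matrix.of (fun a j => kxM M (xs a) (x j)))]
    simp [Matrix.sub_apply, Matrix.mul_apply, Matrix.transpose_apply, hDMdef]
  have hS : ∀ xs (a b : Fin l), qbCov kx kz x z lam ν xs a b
      = kx (xs a) (xs b) - ∑ j, (∑ i, kx (xs a) (x i) * D i j) * kx (xs b) (x j) := by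
    intro xs a b
    show (Matrix.of (fun a b => kx (xs a) (xs b)) -
      Matrix.of (fun a j => kx (xs a) (x j)) * L *
        (lam • (1 : Matrix (Fin n) (Fin n) ℝ) + Kxx * L)⁻¹ *
        (Matrix.of (fun a j => kx (xs a) (x j)))ᵀ) a b = _
    rw [Matrix.mul_assoc (Matrix.of (fun a j => kx (xs a) (x j)))]
    simp [Matrix.sub_apply, Matrix.mul_apply, Matrix.transpose_apply, hDdef]
  constructor
  · intro ε hε
    have hSC : (0:ℝ) ≤ ∑ j, |C j| := Finset.sum_nonneg fun j _ => abs_nonneg _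
    set SC : ℝ := ∑ j, |C j| with hSCdef
    set T : ℝ := Real.sqrt l * (n * κ + SC) + 1 with hTdef
    have hT : 0 < T := by positivity
    set η : ℝ := ε / T with hηdef
    have hη : 0 < η := div_pos hε hT
    obtain ⟨M₁, hM₁⟩ := hconvx η hη
    obtain ⟨M₂, hM₂⟩ := myVec_entrywise hCT hη
    refine ⟨max 1 (max M₁ M₂), fun M hM xs => ?_⟩
    have hM1 : 1 ≤ M := le_trans (le_max_left _ _) hM
    have hMa : M₁ ≤ M := le_trans ((le_max_left _ _).trans (le_max_right _ _)) hM
    have hMb : M₂ ≤ M := le_trans ((le_max_right _ _).trans (le_max_right _ _)) hM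
    set B : ℝ := (n * κ + SC) * η with hBdef
    have hB0 : 0 ≤ B := by positivity
    have habs : ∀ a : Fin l, |qbMean (kxM M) (kzM M) x z Y lam ν xs a
        - qbMean kx kz x z Y lam ν xs a| ≤ B := by
      intro a
      rw [hμM M xs a, hμ xs a, ← Finset.sum_sub_distrib]
      calc |∑ j, (kxM M (xs a) (x j) * CM M j - kx (xs a) (x j) * C j)|
          ≤ ∑ j, |kxM M (xs a) (x j) * CM M j - kx (xs a) (x j) * C j| :=
            Finset.abs_sum_le_sum_abs _ _
        _ ≤ ∑ j : Fin n, (κ * η + η * |C j|) := by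
            apply Finset.sum_le_sum
            intro j _
            have hident : kxM M (xs a) (x j) * CM M j - kx (xs a) (x j) * C j
                = kxM M (xs a) (x j) * (CM M j - C j)
                  + (kxM M (xs a) (x j) - kx (xs a) (x j)) * C j := by ring
            rw [hident]
            refine (abs_add_le _ _).trans (add_le_add ?_ ?_)
            · rw [abs_mul]
              exact mul_le_mul (hkxMbdd M hM1 _ _) (hM₂ M hMb j) (abs_nonneg _) hκ.le
            · rw [abs_mul]
              have h1 : |kxM M (xs a) (x j) - kx (xs a) (x j)| ≤ η := by
                rw [abs_sub_comm]; exact hM₁ M hMa _ _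
              exact mul_le_mul h1 le_rfl (abs_nonneg _) hη.le
        _ = B := by
            rw [Finset.sum_add_distrib, Finset.sum_const, ← Finset.mul_sum, ← hSCdef,
              Finset.card_univ, Fintype.card_fin, hBdef, nsmul_eq_mul]
            ring
    have hdot : ((qbMean (kxM M) (kzM M) x z Y lam ν xs - qbMean kx kz x z Y lam ν xs) ⬝ᵥ
        (qbMean (kxM M) (kzM M) x z Y lam ν xs - qbMean kx kz x z Y lam ν xs)) ≤ l * B ^ 2 := by
      rw [dotProduct]
      calc ∑ i, (qbMean (kxM M) (kzM M) x z Y lam ν xs - qbMean kx kz x z Y lam ν xs) i *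
            (qbMean (kxM M) (kzM M) x z Y lam ν xs - qbMean kx kz x z Y lam ν xs) i
          ≤ ∑ _i : Fin l, B ^ 2 := by
            apply Finset.sum_le_sum
            intro i _
            have h := habs i
            have h2 : (qbMean (kxM M) (kzM M) x z Y lam ν xs - qbMean kx kz x z Y lam ν xs) i
                = qbMean (kxM M) (kzM M) x z Y lam ν xs i - qbMean kx kz x z Y lam ν xs i := rfl
            rw [h2]
            nlinarith [abs_nonneg (qbMean (kxM M) (kzM M) x z Y lam ν xs i
              - qbMean kx kz x z Y lam ν xs i),
              sq_abs (qbMean (kxM M) (kzM M) x z Y lam ν xs i - qbMean kx kz x z Y lam ν xs i)]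
        _ = l * B ^ 2 := by
            rw [Finset.sum_const, Finset.card_univ, Fintype.card_fin, nsmul_eq_mul]
    have h1 : Real.sqrt l * B ≤ ε := by
      have h2 : Real.sqrt l * B ≤ T * η := by
        rw [hBdef, ← mul_assoc]
        apply mul_le_mul_of_nonneg_right _ hη.le
        rw [hTdef]
        linarith
      have hTη : T * η = ε := by
        rw [hηdef]
        field_simp
      linarith
    have hs : Real.sqrt l ^ 2 = (l:ℝ) := Real.sq_sqrt (Nat.cast_nonneg l)
    have h2 : (l : ℝ) * B ^ 2 = (Real.sqrt l * B) ^ 2 := by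
      linear_combination (-(B ^ 2)) * hs
    have h3 : ((qbMean (kxM M) (kzM M) x z Y lam ν xs - qbMean kx kz x z Y lam ν xs) ⬝ᵥ
        (qbMean (kxM M) (kzM M) x z Y lam ν xs - qbMean kx kz x z Y lam ν xs)) ≤ ε ^ 2 := by
      refine hdot.trans ?_
      rw [h2]
      exact pow_le_pow_left₀ (by positivity) h1 2
    calc Real.sqrt _ ≤ Real.sqrt (ε ^ 2) := Real.sqrt_le_sqrt h3
      _ = ε := Real.sqrt_sq hε.le
  · intro ε hε
    have hdA0 : (0:ℝ) ≤ ∑ i, ∑ j, |D i j| :=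
      Finset.sum_nonneg fun i _ => Finset.sum_nonneg fun j _ => abs_nonneg _
    set dA : ℝ := ∑ i, ∑ j, |D i j| with hdAdef
    have hdentry : ∀ i j, |D i j| ≤ dA := by
      intro i j
      calc |D i j| ≤ ∑ j', |D i j'| :=
            Finset.single_le_sum (f := fun j' => |D i j'|)
              (fun j' _ => abs_nonneg _) (Finset.mem_univ j)
        _ ≤ dA :=
            Finset.single_le_sum (f := fun i' => ∑ j', |D i' j'|)
              (fun i' _ => Finset.sum_nonneg fun j' _ => abs_nonneg _) (Finset.mem_univ i)
    set c₂ : ℝ := 1 + (n:ℝ)^2 * (κ * (dA + 1) + κ^2 + κ * dA) with hc2def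
    have hc₂ : 0 < c₂ := by positivity
    set T : ℝ := l * c₂ + 1 with hTdef
    have hT : 0 < T := by positivity
    set η : ℝ := min 1 (ε / T) with hηdef
    have hη : 0 < η := lt_min one_pos (div_pos hε hT)
    have hη1 : η ≤ 1 := min_le_left _ _
    have hηT : η ≤ ε / T := min_le_right _ _
    obtain ⟨M₁, hM₁⟩ := hconvx η hη
    obtain ⟨M₂, hM₂⟩ := myEntrywise hDT hη
    refine ⟨max 1 (max M₁ M₂), fun M hM xs => ?_⟩
    have hM1 : 1 ≤ M := le_trans (le_max_left _ _) hM
    have hMa : M₁ ≤ M := le_trans ((le_max_left _ _).trans (le_max_right _ _)) hM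
    have hMb : M₂ ≤ M := le_trans ((le_max_right _ _).trans (le_max_right _ _)) hM
    have hDMb : ∀ i j, |DM M i j| ≤ dA + 1 := by
      intro i j
      have h := (hM₂ M hMb i j).trans hη1
      calc |DM M i j| = |D i j + (DM M i j - D i j)| := by congr 1; ring
        _ ≤ |D i j| + |DM M i j - D i j| := abs_add_le _ _
        _ ≤ dA + 1 := add_le_add (hdentry i j) h
    have hEntry : ∀ a b : Fin l, |qbCov (kxM M) (kzM M) x z lam ν xs a b
        - qbCov kx kz x z lam ν xs a b| ≤ η * c₂ := by
      intro a b
      rw [hSM M xs a b, hS xs a b]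
      have hsum : (∑ j, (∑ i, kxM M (xs a) (x i) * DM M i j) * kxM M (xs b) (x j))
          - (∑ j, (∑ i, kx (xs a) (x i) * D i j) * kx (xs b) (x j))
          = ∑ j, ∑ i, (kxM M (xs a) (x i) * (DM M i j * kxM M (xs b) (x j))
              - kx (xs a) (x i) * (D i j * kx (xs b) (x j))) := by
        rw [← Finset.sum_sub_distrib]
        apply Finset.sum_congr rfl
        intro j _
        rw [Finset.sum_mul, Finset.sum_mul, ← Finset.sum_sub_distrib]
        apply Finset.sum_congr rfl
        intro i _
        ring
      have hrw : (kxM M (xs a) (xs b)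
            - ∑ j, (∑ i, kxM M (xs a) (x i) * DM M i j) * kxM M (xs b) (x j))
          - (kx (xs a) (xs b) - ∑ j, (∑ i, kx (xs a) (x i) * D i j) * kx (xs b) (x j))
          = (kxM M (xs a) (xs b) - kx (xs a) (xs b))
            - ((∑ j, (∑ i, kxM M (xs a) (x i) * DM M i j) * kxM M (xs b) (x j))
              - ∑ j, (∑ i, kx (xs a) (x i) * D i j) * kx (xs b) (x j)) := by ring
      rw [hrw, hsum]
      have hterm : ∀ j i : Fin n, |kxM M (xs a) (x i) * (DM M i j * kxM M (xs b) (x j))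
          - kx (xs a) (x i) * (D i j * kx (xs b) (x j))|
          ≤ η * ((dA + 1) * κ) + (κ * (η * κ) + κ * (dA * η)) := by
        intro j i
        have hid : kxM M (xs a) (x i) * (DM M i j * kxM M (xs b) (x j))
            - kx (xs a) (x i) * (D i j * kx (xs b) (x j))
            = (kxM M (xs a) (x i) - kx (xs a) (x i)) * (DM M i j * kxM M (xs b) (x j))
              + (kx (xs a) (x i) * ((DM M i j - D i j) * kxM M (xs b) (x j))
              + kx (xs a) (x i) * (D i j * (kxM M (xs b) (x j) - kx (xs b) (x j)))) := by ring
        rw [hid]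
        refine (abs_add_le _ _).trans (add_le_add ?_ ((abs_add_le _ _).trans (add_le_add ?_ ?_)))
        · exact myMul3_bound (by rw [abs_sub_comm]; exact hM₁ M hMa _ _) (hDMb i j)
            (hkxMbdd M hM1 _ _)
        · exact myMul3_bound (hkxbdd _ _) (hM₂ M hMb i j) (hkxMbdd M hM1 _ _)
        · exact myMul3_bound (hkxbdd _ _) (hdentry i j)
            (by rw [abs_sub_comm]; exact hM₁ M hMa _ _)
      have hdsum : |∑ j, ∑ i, (kxM M (xs a) (x i) * (DM M i j * kxM M (xs b) (x j))
          - kx (xs a) (x i) * (D i j * kx (xs b) (x j)))|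
          ≤ (n:ℝ)^2 * (η * ((dA + 1) * κ) + (κ * (η * κ) + κ * (dA * η))) := by
        calc |∑ j, ∑ i, (kxM M (xs a) (x i) * (DM M i j * kxM M (xs b) (x j))
              - kx (xs a) (x i) * (D i j * kx (xs b) (x j)))|
            ≤ ∑ j, |∑ i, (kxM M (xs a) (x i) * (DM M i j * kxM M (xs b) (x j))
              - kx (xs a) (x i) * (D i j * kx (xs b) (x j)))| := Finset.abs_sum_le_sum_abs _ _
          _ ≤ ∑ j : Fin n, ∑ i : Fin n, |kxM M (xs a) (x i) * (DM M i j * kxM M (xs b) (x j))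
              - kx (xs a) (x i) * (D i j * kx (xs b) (x j))| :=
              Finset.sum_le_sum fun j _ => Finset.abs_sum_le_sum_abs _ _
          _ ≤ ∑ _j : Fin n, ∑ _i : Fin n,
              (η * ((dA + 1) * κ) + (κ * (η * κ) + κ * (dA * η))) :=
              Finset.sum_le_sum fun j _ => Finset.sum_le_sum fun i _ => hterm j i
          _ = (n:ℝ)^2 * (η * ((dA + 1) * κ) + (κ * (η * κ) + κ * (dA * η))) := by
              simp [Finset.sum_const, Finset.card_univ, nsmul_eq_mul]
              ring
      calc |(kxM M (xs a) (xs b) - kx (xs a) (xs b))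
            - ∑ j, ∑ i, (kxM M (xs a) (x i) * (DM M i j * kxM M (xs b) (x j))
              - kx (xs a) (x i) * (D i j * kx (xs b) (x j)))|
          ≤ |kxM M (xs a) (xs b) - kx (xs a) (xs b)|
            + |∑ j, ∑ i, (kxM M (xs a) (x i) * (DM M i j * kxM M (xs b) (x j))
              - kx (xs a) (x i) * (D i j * kx (xs b) (x j)))| := abs_sub _ _
        _ ≤ η + (n:ℝ)^2 * (η * ((dA + 1) * κ) + (κ * (η * κ) + κ * (dA * η))) := by
            refine add_le_add ?_ hdsum
            rw [abs_sub_comm]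
            exact hM₁ M hMa _ _
        _ ≤ η * c₂ := by
            rw [hc2def]
            nlinarith [sq_nonneg (n:ℝ), hκ.le, hdA0, hη.le, hη1]
    have hsumsq : (∑ a : Fin l, ∑ b : Fin l,
        (qbCov (kxM M) (kzM M) x z lam ν xs a b - qbCov kx kz x z lam ν xs a b) ^ 2)
        ≤ (l:ℝ)^2 * (η * c₂)^2 := by
      calc (∑ a : Fin l, ∑ b : Fin l,
            (qbCov (kxM M) (kzM M) x z lam ν xs a b - qbCov kx kz x z lam ν xs a b) ^ 2)
          ≤ ∑ _a : Fin l, ∑ _b : Fin l, (η * c₂)^2 := by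
            refine Finset.sum_le_sum fun a _ => Finset.sum_le_sum fun b _ => ?_
            have h := hEntry a b
            nlinarith [abs_nonneg (qbCov (kxM M) (kzM M) x z lam ν xs a b
              - qbCov kx kz x z lam ν xs a b),
              sq_abs (qbCov (kxM M) (kzM M) x z lam ν xs a b - qbCov kx kz x z lam ν xs a b)]
        _ = (l:ℝ)^2 * (η * c₂)^2 := by
            simp [Finset.sum_const, Finset.card_univ, nsmul_eq_mul]
            ring
    have h1 : (l:ℝ) * (η * c₂) ≤ ε := by
      have h2 : (l:ℝ) * (η * c₂) ≤ T * η := by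
        rw [hTdef]
        nlinarith [hη.le, hc₂.le]
      have h3 : T * η ≤ ε := by
        calc T * η ≤ T * (ε / T) := mul_le_mul_of_nonneg_left hηT hT.le
          _ = ε := by field_simp
      linarith
    have h2 : (l:ℝ)^2 * (η * c₂)^2 = ((l:ℝ) * (η * c₂))^2 := by ring
    have h3 : (∑ a : Fin l, ∑ b : Fin l,
        (qbCov (kxM M) (kzM M) x z lam ν xs a b - qbCov kx kz x z lam ν xs a b) ^ 2) ≤ ε ^ 2 := by
      refine hsumsq.trans ?_
      rw [h2]
      exact pow_le_pow_left₀ (by positivity) h1 2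
    calc Real.sqrt _ ≤ Real.sqrt (ε ^ 2) := Real.sqrt_le_sqrt h3
      _ = ε := Real.sqrt_sq hε.le
end

section
/- Fix integers n, m, m' ≥ 1, matrices Φ_f ∈ ℝ^{n×m} and Φ_g ∈ ℝ^{n×m'}, vectors Ỹ ∈ ℝⁿ, θ₀ ∈ ℝᵐ, φ₀ ∈ ℝ^{m'}, and reals λ > 0, ν > 0, and let 𝓛 be the objective 𝓛(θ,φ) = θᵀΦ_fᵀΦ_g φ − ỸᵀΦ_g φ − ½ φᵀΦ_gᵀΦ_g φ − (ν/2)‖φ − φ₀‖² + (λ/2)‖θ − θ₀‖², whose partial gradients are ∇_θ𝓛(θ,φ) = Φ_fᵀΦ_g φ + λ(θ − θ₀) and ∇_φ𝓛(θ,φ) = Φ_gᵀΦ_f θ − Φ_gᵀỸ − Φ_gᵀΦ_g φ − ν(φ − φ₀). Then with μ := min{λ, ν}, for all θ, θ' ∈ ℝᵐ and φ, φ' ∈ ℝ^{m'}: ⟨θ − θ', ∇_θ𝓛(θ,φ) − ∇_θ𝓛(θ',φ')⟩ − ⟨φ − φ', ∇_φ𝓛(θ,φ) − ∇_φ𝓛(θ',φ')⟩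 ≥ μ(‖θ − θ'‖² + ‖φ − φ'‖²). -/
/-!
The vector field is affine, so its increments are linear in `(θ - θ', φ - φ')`. In the pairing
the coupling terms `Φfᵀ Φg` and `Φgᵀ Φf = (Φfᵀ Φg)ᵀ` cancel, leaving
`λ‖θ - θ'‖² + ν‖φ - φ'‖² + ‖Φg (φ - φ')‖²`, and the last term is nonnegative.
-/

open Matrix

section CoupledField

variable {R k m m' : Type*} [Fintype k] [Fintype m] [Fintype m']

theorem dotProduct_coupledField_sub [CommRing R] (A : Matrix k m R) (B : Matrix k m' R)
    (lam ν : R) (a : m → R) (b : m' → R) :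
    a ⬝ᵥ ((Aᵀ * B) *ᵥ b + lam • a) - b ⬝ᵥ ((Bᵀ * A) *ᵥ a - (Bᵀ * B) *ᵥ b - ν • b) =
      lam * (a ⬝ᵥ a) + ν * (b ⬝ᵥ b) + (B *ᵥ b) ⬝ᵥ (B *ᵥ b) := by
  have hcross : a ⬝ᵥ ((Aᵀ * B) *ᵥ b) = b ⬝ᵥ ((Bᵀ * A) *ᵥ a) := by
    rw [← dotProduct_transpose_mulVec, transpose_mul, transpose_transpose]
  have hgram : b ⬝ᵥ ((Bᵀ * B) *ᵥ b) = (B *ᵥ b) ⬝ᵥ (B *ᵥ b) := by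
    rw [← mulVec_mulVec, dotProduct_transpose_mulVec]
  simp only [dotProduct_add, dotProduct_sub, dotProduct_smul, smul_eq_mul, hcross, hgram]
  ring

end CoupledField

theorem min_mul_add_le_mul_add_mul {α : Type*} [Semiring α] [LinearOrder α] [IsOrderedRing α]
    {a c x y : α} (hx : 0 ≤ x) (hy : 0 ≤ y) : min a c * (x + y) ≤ a * x + c * y := by
  rw [mul_add]
  gcongr
  exacts [min_le_left a c, min_le_right a c]

theorem stmt13_general (n m m' : ℕ)
    (Φf : Matrix (Fin n) (Fin m) ℝ) (Φg : Matrix (Fin n) (Fin m') ℝ)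
    (Yt : Fin n → ℝ) (θ₀ : Fin m → ℝ) (φ₀ : Fin m' → ℝ)
    (lam ν : ℝ) :
    let gθ : (Fin m → ℝ) → (Fin m' → ℝ) → (Fin m → ℝ) := fun θ φ =>
      (Φfᵀ * Φg) *ᵥ φ + lam • (θ - θ₀)
    let gφ : (Fin m → ℝ) → (Fin m' → ℝ) → (Fin m' → ℝ) := fun θ φ =>
      (Φgᵀ * Φf) *ᵥ θ - Φgᵀ *ᵥ Yt - (Φgᵀ * Φg) *ᵥ φ - ν • (φ - φ₀)
    ∀ (θ θ' : Fin m → ℝ) (φ φ' : Fin m' → ℝ),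
      (θ - θ') ⬝ᵥ (gθ θ φ - gθ θ' φ') - (φ - φ') ⬝ᵥ (gφ θ φ - gφ θ' φ') ≥
        min lam ν * ((θ - θ') ⬝ᵥ (θ - θ') + (φ - φ') ⬝ᵥ (φ - φ')) := by
  intro gθ gφ θ θ' φ φ'
  have hθ : gθ θ φ - gθ θ' φ' = (Φfᵀ * Φg) *ᵥ (φ - φ') + lam • (θ - θ') := by
    simp only [gθ, mulVec_sub]
    module
  have hφ : gφ θ φ - gφ θ' φ' =
      (Φgᵀ * Φf) *ᵥ (θ - θ') - (Φgᵀ * Φg) *ᵥ (φ - φ') - ν • (φ - φ') := by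
    simp only [gφ, mulVec_sub]
    module
  rw [hθ, hφ, dotProduct_coupledField_sub, ge_iff_le]
  have hsq : ∀ {ι : Type} [Fintype ι] (v : ι → ℝ), 0 ≤ v ⬝ᵥ v := fun v => by
    simpa using dotProduct_star_self_nonneg v
  have hmin := min_mul_add_le_mul_add_mul (a := lam) (c := ν) (hsq (θ - θ')) (hsq (φ - φ'))
  linarith [hsq (Φg *ᵥ (φ - φ'))]

/-- Strong monotonicity of the saddle-point vector field `(∇_θ𝓛, −∇_φ𝓛)` of the
randomized-prior minimax objective, with modulus `μ = min{λ, ν}`. -/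
theorem stmt13 (n m m' : ℕ) (hn : 0 < n) (hm : 0 < m) (hm' : 0 < m')
    (Φf : Matrix (Fin n) (Fin m) ℝ) (Φg : Matrix (Fin n) (Fin m') ℝ)
    (Yt : Fin n → ℝ) (θ₀ : Fin m → ℝ) (φ₀ : Fin m' → ℝ)
    (lam ν : ℝ) (hlam : 0 < lam) (hν : 0 < ν) :
    let gθ : (Fin m → ℝ) → (Fin m' → ℝ) → (Fin m → ℝ) := fun θ φ =>
      (Φfᵀ * Φg) *ᵥ φ + lam • (θ - θ₀)
    let gφ : (Fin m → ℝ) → (Fin m' → ℝ) → (Fin m' → ℝ) := fun θ φ =>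
      (Φgᵀ * Φf) *ᵥ θ - Φgᵀ *ᵥ Yt - (Φgᵀ * Φg) *ᵥ φ - ν • (φ - φ₀)
    ∀ (θ θ' : Fin m → ℝ) (φ φ' : Fin m' → ℝ),
      (θ - θ') ⬝ᵥ (gθ θ φ - gθ θ' φ') - (φ - φ') ⬝ᵥ (gφ θ φ - gφ θ' φ') ≥
        min lam ν * ((θ - θ') ⬝ᵥ (θ - θ') + (φ - φ') ⬝ᵥ (φ - φ')) :=
  stmt13_general n m m' Φf Φg Yt θ₀ φ₀ lam ν
end

section
/- Fix integers n, m, m' ≥ 1, matrices Φ_f ∈ ℝ^{n×m} and Φ_g ∈ ℝ^{n×m'}, vectors Ỹ ∈ ℝⁿ, θ₀ ∈ ℝᵐ, φ₀ ∈ ℝ^{m'}, and reals λ > 0, ν > 0. For i = 1,…,n let E_i := e_i e_iᵀ (e_i the i-th standard basis vector of ℝⁿ), and define 𝓛_i(θ,φ) := n(θᵀΦ_fᵀE_iΦ_g φ − ỸᵀE_iΦ_g φ − ½ φᵀΦ_gᵀE_iΦ_g φ) − (ν/2)‖φ − φ₀‖² + (λ/2)‖θ − θ₀‖², with partial gradients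 ∇_θ𝓛_i(θ,φ) = nΦ_fᵀE_iΦ_g φ + λ(θ − θ₀) and ∇_φ𝓛_i(θ,φ) = n(Φ_gᵀE_iΦ_f θ − Φ_gᵀE_iỸ − Φ_gᵀE_iΦ_g φ) − ν(φ − φ₀). Let (θ*, φ*) be the unique saddle point of 𝓛 := (1/n)∑_{i=1}^n 𝓛_i, and set μ := min{λ, ν}. Then for every θ ∈ ℝᵐ, φ ∈ ℝ^{m'}, η > 0 and every σ_f, σ_g ≥ 0 with ‖∇_θ𝓛_i(θ,φ)‖ ≤ σ_f and ‖∇_φ𝓛_i(θ,φ)‖ ≤ σ_g for all i ∈ {1,…,n}: (1/n)∑_{i=1}^n [‖θ − η∇_θ𝓛_i(θ,φ) − θ*‖² + ‖φ + η∇_φ𝓛_i(θ,φ) − φ*‖²] ≤ (1 − 2μη)(‖θ − θ*‖² + ‖φ − φ*‖²) + η²(σ_f² + σ_g²). -/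
/-!
Averaging the per-sample gradients over the data index recovers the full gradients of `𝓛`,
because `∑ᵢ Eᵢ = 1`. The saddle point is a critical point of `𝓛` (a linear functional dominated
by a quadratic form vanishes), and the field `(∇_θ𝓛, -∇_φ𝓛)` of this quadratic saddle function
is strongly monotone: pairing its increment with a displacement `(u, w)` gives
`λ‖u‖² + ν‖w‖² + ‖Φ_g w‖² ≥ μ (‖u‖² + ‖w‖²)`. Expanding the squared distance after one step,
the cross term is controlled by this monotonicity and the quadratic term by the gradient bounds.
-/

open Matrix
open scoped BigOperators

section Quadratic

variable {κ : Type*} [Fintype κ]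

theorem Matrix.eq_zero_of_forall_dotProduct_le_quadratic (g : κ → ℝ) (q : (κ → ℝ) → ℝ)
    (hq : ∀ (t : ℝ) (w : κ → ℝ), q (t • w) = t ^ 2 * q w) (h : ∀ w, w ⬝ᵥ g ≤ q w) : g = 0 := by
  refine dotProduct_self_eq_zero.mp (le_antisymm ?_ (dotProduct_self_star_nonneg g))
  refine le_of_forall_pos_le_add fun ε hε => ?_
  -- testing `h` at `t • g` gives `g ⬝ᵥ g ≤ t * q g` for every `t > 0`
  set t := ε / (|q g| + 1)
  have ht : 0 < t := by positivity
  have hle : t * (g ⬝ᵥ g) ≤ t * (t * q g) := by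
    simpa [smul_dotProduct, hq, pow_two, mul_assoc] using h (t • g)
  have htq : t * q g ≤ ε := by
    calc t * q g ≤ t * (|q g| + 1) := by gcongr; linarith [le_abs_self (q g)]
      _ = ε := by simp only [t]; field_simp
  linarith [le_of_mul_le_mul_left hle ht]

end Quadratic

section StochasticStep

variable {ι κ κ' : Type*} [Fintype ι] [Nonempty ι] [Fintype κ] [Fintype κ']

theorem expect_sgda_step_le (u : κ → ℝ) (w : κ' → ℝ) (g : ι → κ → ℝ) (h : ι → κ' → ℝ)
    {η μ σf σg : ℝ} (hη : 0 ≤ η)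
    (hmono : μ * (u ⬝ᵥ u + w ⬝ᵥ w) ≤ 𝔼 i, (u ⬝ᵥ g i - w ⬝ᵥ h i))
    (hg : ∀ i, g i ⬝ᵥ g i ≤ σf ^ 2) (hh : ∀ i, h i ⬝ᵥ h i ≤ σg ^ 2) :
    𝔼 i, ((u - η • g i) ⬝ᵥ (u - η • g i) + (w + η • h i) ⬝ᵥ (w + η • h i)) ≤
      (1 - 2 * μ * η) * (u ⬝ᵥ u + w ⬝ᵥ w) + η ^ 2 * (σf ^ 2 + σg ^ 2) := by
  calc 𝔼 i, ((u - η • g i) ⬝ᵥ (u - η • g i) + (w + η • h i) ⬝ᵥ (w + η • h i))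
      = 𝔼 i, ((u ⬝ᵥ u + w ⬝ᵥ w) - 2 * η * (u ⬝ᵥ g i - w ⬝ᵥ h i)
          + η ^ 2 * (g i ⬝ᵥ g i + h i ⬝ᵥ h i)) := by
        refine Finset.expect_congr rfl fun i _ => ?_
        simp only [sub_dotProduct, dotProduct_sub, add_dotProduct, dotProduct_add,
          smul_dotProduct, dotProduct_smul, smul_eq_mul, dotProduct_comm (g i) u,
          dotProduct_comm (h i) w]
        ring
    _ ≤ 𝔼 i, ((u ⬝ᵥ u + w ⬝ᵥ w) - 2 * η * (u ⬝ᵥ g i - w ⬝ᵥ h i)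
          + η ^ 2 * (σf ^ 2 + σg ^ 2)) :=
        Finset.expect_le_expect fun i _ => by gcongr; exacts [hg i, hh i]
    _ = (u ⬝ᵥ u + w ⬝ᵥ w) - 2 * η * 𝔼 i, (u ⬝ᵥ g i - w ⬝ᵥ h i)
          + η ^ 2 * (σf ^ 2 + σg ^ 2) := by
        rw [Finset.expect_add_distrib, Finset.expect_sub_distrib, Fintype.expect_const,
          Fintype.expect_const, Finset.mul_expect]
    _ ≤ _ := by nlinarith

end StochasticStep

section MatrixIdentities

variable {α ι κ κ' : Type*} [Fintype ι]

theorem Matrix.dotProduct_transpose_mul_mulVec [CommSemiring α] [Fintype κ] [Fintype κ']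
    (A : Matrix ι κ α) (B : Matrix ι κ' α) (x : κ → α) (y : κ' → α) :
    x ⬝ᵥ ((Aᵀ * B) *ᵥ y) = (A *ᵥ x) ⬝ᵥ (B *ᵥ y) := by
  rw [← mulVec_mulVec, dotProduct_transpose_mulVec, dotProduct_comm]

variable [DecidableEq ι]

theorem Matrix.sum_mul_single_mul [NonAssocSemiring α] (A : Matrix κ ι α) (B : Matrix ι κ' α) :
    ∑ i : ι, A * single i i (1 : α) * B = A * B := by
  rw [← Matrix.sum_mul, ← Matrix.mul_sum, sum_single_one, Matrix.mul_one]

theorem Matrix.sum_dotProduct_single_mulVec [NonAssocSemiring α] (x y : ι → α) :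
    ∑ i, x ⬝ᵥ (single i i (1 : α) *ᵥ y) = x ⬝ᵥ y := by
  rw [← dotProduct_sum, ← sum_mulVec, sum_single_one, one_mulVec]

end MatrixIdentities

namespace DualIV

variable {ι κ κ' : Type*} [Fintype ι] [Fintype κ] [Fintype κ']
  (Φf : Matrix ι κ ℝ) (Φg : Matrix ι κ' ℝ) (Y : ι → ℝ) (θ₀ : κ → ℝ) (φ₀ : κ' → ℝ) (lam ν : ℝ)

noncomputable def objective (θ : κ → ℝ) (φ : κ' → ℝ) : ℝ :=
  (Φf *ᵥ θ) ⬝ᵥ (Φg *ᵥ φ) - Y ⬝ᵥ (Φg *ᵥ φ) - (1 / 2) * ((Φg *ᵥ φ) ⬝ᵥ (Φg *ᵥ φ))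
    - (ν / 2) * ((φ - φ₀) ⬝ᵥ (φ - φ₀)) + (lam / 2) * ((θ - θ₀) ⬝ᵥ (θ - θ₀))

def gradθ (θ : κ → ℝ) (φ : κ' → ℝ) : κ → ℝ :=
  (Φfᵀ * Φg) *ᵥ φ + lam • (θ - θ₀)

def gradφ (θ : κ → ℝ) (φ : κ' → ℝ) : κ' → ℝ :=
  (Φgᵀ * Φf) *ᵥ θ - Φgᵀ *ᵥ Y - (Φgᵀ * Φg) *ᵥ φ - ν • (φ - φ₀)

lemma objective_add_left (θ v : κ → ℝ) (φ : κ' → ℝ) :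
    objective Φf Φg Y θ₀ φ₀ lam ν (θ + v) φ =
      objective Φf Φg Y θ₀ φ₀ lam ν θ φ + v ⬝ᵥ gradθ Φf Φg θ₀ lam θ φ + lam / 2 * (v ⬝ᵥ v) := by
  simp only [objective, gradθ, add_sub_right_comm θ v, mulVec_add, add_dotProduct, dotProduct_add,
    dotProduct_smul, dotProduct_transpose_mul_mulVec, smul_eq_mul, dotProduct_comm v (θ - θ₀)]
  ring

lemma objective_add_right (θ : κ → ℝ) (φ w : κ' → ℝ) :
    objective Φf Φg Y θ₀ φ₀ lam ν θ (φ + w) =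
      objective Φf Φg Y θ₀ φ₀ lam ν θ φ + w ⬝ᵥ gradφ Φf Φg Y φ₀ ν θ φ
        - (1 / 2) * ((Φg *ᵥ w) ⬝ᵥ (Φg *ᵥ w)) - ν / 2 * (w ⬝ᵥ w) := by
  simp only [objective, gradφ, add_sub_right_comm φ w, mulVec_add, add_dotProduct, dotProduct_add,
    dotProduct_sub, sub_dotProduct, dotProduct_smul, dotProduct_transpose_mul_mulVec,
    dotProduct_transpose_mulVec, smul_eq_mul]
  rw [dotProduct_comm w φ, dotProduct_comm w φ₀, dotProduct_comm (Φg *ᵥ w) (Φf *ᵥ θ),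
    dotProduct_comm (Φg *ᵥ w) (Φg *ᵥ φ)]
  ring

lemma gradθ_sub_gradφ_dotProduct_add (θ u : κ → ℝ) (φ w : κ' → ℝ) :
    u ⬝ᵥ (gradθ Φf Φg θ₀ lam (θ + u) (φ + w) - gradθ Φf Φg θ₀ lam θ φ)
      - w ⬝ᵥ (gradφ Φf Φg Y φ₀ ν (θ + u) (φ + w) - gradφ Φf Φg Y φ₀ ν θ φ)
      = lam * (u ⬝ᵥ u) + ν * (w ⬝ᵥ w) + (Φg *ᵥ w) ⬝ᵥ (Φg *ᵥ w) := by
  simp only [gradθ, gradφ, add_sub_right_comm _ _ θ₀, add_sub_right_comm _ _ φ₀, mulVec_add,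
    dotProduct_add, dotProduct_sub, dotProduct_smul, dotProduct_transpose_mul_mulVec,
    dotProduct_transpose_mulVec, smul_eq_mul]
  rw [dotProduct_comm (Φg *ᵥ w) (Φf *ᵥ u)]
  ring

variable {Φf Φg Y θ₀ φ₀ lam ν}

lemma gradθ_eq_zero_of_forall_le {θs : κ → ℝ} {φs : κ' → ℝ}
    (h : ∀ θ, objective Φf Φg Y θ₀ φ₀ lam ν θs φs ≤ objective Φf Φg Y θ₀ φ₀ lam ν θ φs) :
    gradθ Φf Φg θ₀ lam θs φs = 0 := by
  refine eq_zero_of_forall_dotProduct_le_quadratic _ (fun v => lam / 2 * (v ⬝ᵥ v))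
    (fun t v => by simp only [smul_dotProduct, dotProduct_smul, smul_eq_mul]; ring) fun v => ?_
  have := h (θs + -v)
  rw [objective_add_left, neg_dotProduct, neg_dotProduct, dotProduct_neg, neg_neg] at this
  linarith

lemma gradφ_eq_zero_of_forall_le {θs : κ → ℝ} {φs : κ' → ℝ}
    (h : ∀ φ, objective Φf Φg Y θ₀ φ₀ lam ν θs φ ≤ objective Φf Φg Y θ₀ φ₀ lam ν θs φs) :
    gradφ Φf Φg Y φ₀ ν θs φs = 0 := by
  refine eq_zero_of_forall_dotProduct_le_quadratic _
    (fun w => 1 / 2 * ((Φg *ᵥ w) ⬝ᵥ (Φg *ᵥ w)) + ν / 2 * (w ⬝ᵥ w))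
    (fun t w => by simp only [mulVec_smul, smul_dotProduct, dotProduct_smul, smul_eq_mul]; ring)
    fun w => ?_
  have := h (φs + w)
  rw [objective_add_right] at this
  linarith

theorem min_mul_le_gradθ_sub_gradφ {θs : κ → ℝ} {φs : κ' → ℝ}
    (hθs : gradθ Φf Φg θ₀ lam θs φs = 0) (hφs : gradφ Φf Φg Y φ₀ ν θs φs = 0)
    (θ : κ → ℝ) (φ : κ' → ℝ) :
    min lam ν * ((θ - θs) ⬝ᵥ (θ - θs) + (φ - φs) ⬝ᵥ (φ - φs)) ≤
      (θ - θs) ⬝ᵥ gradθ Φf Φg θ₀ lam θ φ - (φ - φs) ⬝ᵥ gradφ Φf Φg Y φ₀ ν θ φ := by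
  have key := gradθ_sub_gradφ_dotProduct_add Φf Φg Y θ₀ φ₀ lam ν θs (θ - θs) φs (φ - φs)
  rw [add_sub_cancel, add_sub_cancel, hθs, hφs, sub_zero, sub_zero] at key
  rw [key]
  have hu := dotProduct_self_star_nonneg (θ - θs)
  have hw := dotProduct_self_star_nonneg (φ - φs)
  have hg := dotProduct_self_star_nonneg (Φg *ᵥ (φ - φs))
  simp only [star_trivial] at hu hw hg
  nlinarith [min_le_left lam ν, min_le_right lam ν]

section SampleAverages

variable {n : ℕ} {κ κ' : Type*} [Fintype κ'] (Φf : Matrix (Fin n) κ ℝ)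
  (Φg : Matrix (Fin n) κ' ℝ) (Y : Fin n → ℝ) (θ₀ : κ → ℝ) (φ₀ : κ' → ℝ) (lam ν : ℝ)
  (θ : κ → ℝ) (φ : κ' → ℝ)

theorem sum_sample_gradθ :
    ∑ i : Fin n, ((n : ℝ) • ((Φfᵀ * single i i (1 : ℝ) * Φg) *ᵥ φ) + lam • (θ - θ₀))
      = (n : ℝ) • gradθ Φf Φg θ₀ lam θ φ := by
  simp only [gradθ, Finset.sum_add_distrib, ← Finset.smul_sum, ← sum_mulVec, sum_mul_single_mul,
    Finset.sum_const, Finset.card_univ, Fintype.card_fin]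
  module

variable [Fintype κ]

theorem mean_sample_objective (hn : (n : ℝ) ≠ 0) :
    (1 / (n : ℝ)) * ∑ i : Fin n,
      ((n : ℝ) * ((Φf *ᵥ θ) ⬝ᵥ (single i i (1 : ℝ) *ᵥ (Φg *ᵥ φ))
          - Y ⬝ᵥ (single i i (1 : ℝ) *ᵥ (Φg *ᵥ φ))
          - (1 / 2) * ((Φg *ᵥ φ) ⬝ᵥ (single i i (1 : ℝ) *ᵥ (Φg *ᵥ φ))))
        - (ν / 2) * ((φ - φ₀) ⬝ᵥ (φ - φ₀)) + (lam / 2) * ((θ - θ₀) ⬝ᵥ (θ - θ₀)))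
      = objective Φf Φg Y θ₀ φ₀ lam ν θ φ := by
  simp only [Finset.sum_add_distrib, Finset.sum_sub_distrib, ← Finset.mul_sum,
    sum_dotProduct_single_mulVec, Finset.sum_const, Finset.card_univ, Fintype.card_fin,
    nsmul_eq_mul, objective]
  field_simp

theorem sum_sample_gradφ :
    ∑ i : Fin n, ((n : ℝ) • ((Φgᵀ * single i i (1 : ℝ) * Φf) *ᵥ θ
        - (Φgᵀ * single i i (1 : ℝ)) *ᵥ Y - (Φgᵀ * single i i (1 : ℝ) * Φg) *ᵥ φ) - ν • (φ - φ₀))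
      = (n : ℝ) • gradφ Φf Φg Y φ₀ ν θ φ := by
  simp only [gradφ, Finset.sum_sub_distrib, ← Finset.smul_sum, ← sum_mulVec, sum_mul_single_mul,
    ← Matrix.mul_sum, sum_single_one, Matrix.mul_one, Finset.sum_const, Finset.card_univ,
    Fintype.card_fin]
  module

end SampleAverages

end DualIV

open DualIV

theorem stmt14_general (n m m' : ℕ) (hn : 0 < n)
    (Φf : Matrix (Fin n) (Fin m) ℝ) (Φg : Matrix (Fin n) (Fin m') ℝ)
    (Yt : Fin n → ℝ) (θ₀ : Fin m → ℝ) (φ₀ : Fin m' → ℝ)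
    (lam ν : ℝ) :
    let Ei : Fin n → Matrix (Fin n) (Fin n) ℝ := fun i => Matrix.single i i 1
    let Li : Fin n → (Fin m → ℝ) → (Fin m' → ℝ) → ℝ := fun i θ φ =>
      (n : ℝ) * ((Φf *ᵥ θ) ⬝ᵥ (Ei i *ᵥ (Φg *ᵥ φ)) - Yt ⬝ᵥ (Ei i *ᵥ (Φg *ᵥ φ))
          - (1 / 2) * ((Φg *ᵥ φ) ⬝ᵥ (Ei i *ᵥ (Φg *ᵥ φ))))
        - (ν / 2) * ((φ - φ₀) ⬝ᵥ (φ - φ₀)) + (lam / 2) * ((θ - θ₀) ⬝ᵥ (θ - θ₀))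
    let gθi : Fin n → (Fin m → ℝ) → (Fin m' → ℝ) → (Fin m → ℝ) := fun i θ φ =>
      (n : ℝ) • ((Φfᵀ * Ei i * Φg) *ᵥ φ) + lam • (θ - θ₀)
    let gφi : Fin n → (Fin m → ℝ) → (Fin m' → ℝ) → (Fin m' → ℝ) := fun i θ φ =>
      (n : ℝ) • ((Φgᵀ * Ei i * Φf) *ᵥ θ - (Φgᵀ * Ei i) *ᵥ Yt - (Φgᵀ * Ei i * Φg) *ᵥ φ)
        - ν • (φ - φ₀)
    let Lfull : (Fin m → ℝ) → (Fin m' → ℝ) → ℝ := fun θ φ =>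
      (1 / (n : ℝ)) * ∑ i : Fin n, Li i θ φ
    ∀ (θs : Fin m → ℝ) (φs : Fin m' → ℝ),
      ((∀ φ : Fin m' → ℝ, Lfull θs φ ≤ Lfull θs φs) ∧
        (∀ θ : Fin m → ℝ, Lfull θs φs ≤ Lfull θ φs)) →
      ∀ (θ : Fin m → ℝ) (φ : Fin m' → ℝ) (η : ℝ), 0 < η →
        ∀ σf σg : ℝ, 0 ≤ σf → 0 ≤ σg →
          (∀ i : Fin n, Real.sqrt (gθi i θ φ ⬝ᵥ gθi i θ φ) ≤ σf) →
          (∀ i : Fin n, Real.sqrt (gφi i θ φ ⬝ᵥ gφi i θ φ) ≤ σg) →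
          (1 / (n : ℝ)) * ∑ i : Fin n,
              ((θ - η • gθi i θ φ - θs) ⬝ᵥ (θ - η • gθi i θ φ - θs) +
                (φ + η • gφi i θ φ - φs) ⬝ᵥ (φ + η • gφi i θ φ - φs)) ≤
            (1 - 2 * min lam ν * η) *
              ((θ - θs) ⬝ᵥ (θ - θs) + (φ - φs) ⬝ᵥ (φ - φs)) + η ^ 2 * (σf ^ 2 + σg ^ 2) := by
  intro Ei Li gθi gφi Lfull θs φs hsaddle θ φ η hη σf σg _ _ hθbound hφbound
  have : Nonempty (Fin n) := ⟨⟨0, hn⟩⟩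
  have hn₀ : (n : ℝ) ≠ 0 := by positivity
  have hL : ∀ θ φ, Lfull θ φ = objective Φf Φg Yt θ₀ φ₀ lam ν θ φ :=
    fun θ φ => mean_sample_objective Φf Φg Yt θ₀ φ₀ lam ν θ φ hn₀
  have hgθ : ∑ i, gθi i θ φ = (n : ℝ) • gradθ Φf Φg θ₀ lam θ φ :=
    sum_sample_gradθ Φf Φg θ₀ lam θ φ
  have hgφ : ∑ i, gφi i θ φ = (n : ℝ) • gradφ Φf Φg Yt φ₀ ν θ φ :=
    sum_sample_gradφ Φf Φg Yt φ₀ ν θ φ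
  have hθs := gradθ_eq_zero_of_forall_le fun θ => by simpa only [hL] using hsaddle.2 θ
  have hφs := gradφ_eq_zero_of_forall_le fun φ => by simpa only [hL] using hsaddle.1 φ
  have hmono : min lam ν * ((θ - θs) ⬝ᵥ (θ - θs) + (φ - φs) ⬝ᵥ (φ - φs)) ≤
      𝔼 i, ((θ - θs) ⬝ᵥ gθi i θ φ - (φ - φs) ⬝ᵥ gφi i θ φ) := by
    rw [Fintype.expect_eq_sum_div_card, Finset.sum_sub_distrib, ← dotProduct_sum,
      ← dotProduct_sum, hgθ, hgφ, dotProduct_smul, dotProduct_smul, smul_eq_mul, smul_eq_mul,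
      ← mul_sub, Fintype.card_fin, mul_div_cancel_left₀ _ hn₀]
    exact min_mul_le_gradθ_sub_gradφ hθs hφs θ φ
  have hstep := expect_sgda_step_le (θ - θs) (φ - φs) (fun i => gθi i θ φ) (fun i => gφi i θ φ)
    hη.le hmono (fun i => (Real.sqrt_le_iff.mp (hθbound i)).2)
    (fun i => (Real.sqrt_le_iff.mp (hφbound i)).2)
  rw [Fintype.expect_eq_sum_div_card, Fintype.card_fin] at hstep
  simp_rw [sub_right_comm θ _ θs, add_sub_right_comm φ _ φs, one_div_mul_eq_div]
  exact hstep

/-- One-step expected contraction of stochastic gradient descent–ascent with a uniformly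
random data index on the randomized-prior minimax objective `𝓛 = (1/n)∑ᵢ 𝓛ᵢ`: if `(θ*, φ*)`
is a saddle point of `𝓛`, `μ = min{λ, ν}`, and the stochastic gradients at `(θ, φ)` are
bounded by `σ_f, σ_g`, then the averaged squared distance after one step of size `η`
contracts as `(1 − 2μη)(‖θ − θ*‖² + ‖φ − φ*‖²) + η²(σ_f² + σ_g²)`. -/
theorem stmt14 (n m m' : ℕ) (hn : 0 < n) (hm : 0 < m) (hm' : 0 < m')
    (Φf : Matrix (Fin n) (Fin m) ℝ) (Φg : Matrix (Fin n) (Fin m') ℝ)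
    (Yt : Fin n → ℝ) (θ₀ : Fin m → ℝ) (φ₀ : Fin m' → ℝ)
    (lam ν : ℝ) (hlam : 0 < lam) (hν : 0 < ν) :
    let Ei : Fin n → Matrix (Fin n) (Fin n) ℝ := fun i => Matrix.single i i 1
    let Li : Fin n → (Fin m → ℝ) → (Fin m' → ℝ) → ℝ := fun i θ φ =>
      (n : ℝ) * ((Φf *ᵥ θ) ⬝ᵥ (Ei i *ᵥ (Φg *ᵥ φ)) - Yt ⬝ᵥ (Ei i *ᵥ (Φg *ᵥ φ))
          - (1 / 2) * ((Φg *ᵥ φ) ⬝ᵥ (Ei i *ᵥ (Φg *ᵥ φ))))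
        - (ν / 2) * ((φ - φ₀) ⬝ᵥ (φ - φ₀)) + (lam / 2) * ((θ - θ₀) ⬝ᵥ (θ - θ₀))
    let gθi : Fin n → (Fin m → ℝ) → (Fin m' → ℝ) → (Fin m → ℝ) := fun i θ φ =>
      (n : ℝ) • ((Φfᵀ * Ei i * Φg) *ᵥ φ) + lam • (θ - θ₀)
    let gφi : Fin n → (Fin m → ℝ) → (Fin m' → ℝ) → (Fin m' → ℝ) := fun i θ φ =>
      (n : ℝ) • ((Φgᵀ * Ei i * Φf) *ᵥ θ - (Φgᵀ * Ei i) *ᵥ Yt - (Φgᵀ * Ei i * Φg) *ᵥ φ)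
        - ν • (φ - φ₀)
    let Lfull : (Fin m → ℝ) → (Fin m' → ℝ) → ℝ := fun θ φ =>
      (1 / (n : ℝ)) * ∑ i : Fin n, Li i θ φ
    ∀ (θs : Fin m → ℝ) (φs : Fin m' → ℝ),
      ((∀ φ : Fin m' → ℝ, Lfull θs φ ≤ Lfull θs φs) ∧
        (∀ θ : Fin m → ℝ, Lfull θs φs ≤ Lfull θ φs)) →
      ∀ (θ : Fin m → ℝ) (φ : Fin m' → ℝ) (η : ℝ), 0 < η →
        ∀ σf σg : ℝ, 0 ≤ σf → 0 ≤ σg →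
          (∀ i : Fin n, Real.sqrt (gθi i θ φ ⬝ᵥ gθi i θ φ) ≤ σf) →
          (∀ i : Fin n, Real.sqrt (gφi i θ φ ⬝ᵥ gφi i θ φ) ≤ σg) →
          (1 / (n : ℝ)) * ∑ i : Fin n,
              ((θ - η • gθi i θ φ - θs) ⬝ᵥ (θ - η • gθi i θ φ - θs) +
                (φ + η • gφi i θ φ - φs) ⬝ᵥ (φ + η • gφi i θ φ - φs)) ≤
            (1 - 2 * min lam ν * η) *
              ((θ - θs) ⬝ᵥ (θ - θs) + (φ - φs) ⬝ᵥ (φ - φs)) + η ^ 2 * (σf ^ 2 + σg ^ 2) :=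
  stmt14_general n m m' hn Φf Φg Yt θ₀ φ₀ lam ν
end
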